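/- arXiv:2507.08724 — 6 statements merged into one kernel-verified Lean document; each statement's English description precedes it below -/
import Mathlib

section
/- Let i < j with 0 < i and j < n be indices such that i is a lower reflex index, j is an upper reflex index, h_i − h_j > 2L, and the pair (l_i, u_j) is visible. Then the minimum of the set of β ≥ 0 for which there exists a continuous piecewise-linear function g : [t_i, t_j] → ℝ, affine with slope in {β, −β} on each piece of some finite partition, satisfying |g(t) − f(t)| ≤ L for all t ∈ [t_i, t_j], equals s(l_i, u_j) = (h_i − h_j − 2L)/(t_j − t_i); the minimum is attained by the affine function joining l_i = (t_i, h_i − L) to u_j = (t_j, h_j + L). -/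
/-!
Over `[t i, t j]` a path with slopes `±β` changes by at most `β (t j - t i)`, while the
corridor forces it to start at height `≥ h i - L` and end at height `≤ h j + L`, so
`β ≥ s(l_i, u_j)`. Visibility says exactly that the segment from `l_i` to `u_j`, whose
slope is `-s(l_i, u_j)`, stays in the corridor, so the bound is attained.
-/

/-- `PWLinSlope β a b g` : `g` is continuous piecewise-linear on `[a, b]`,
affine with slope `β` or `-β` on each interval of some finite partition of `[a, b]`. -/
def PWLinSlope (β a b : ℝ) (g : ℝ → ℝ) : Prop :=
  ∃ m : ℕ, ∃ s : ℕ → ℝ, s 0 = a ∧ s m = b ∧ (∀ k < m, s k < s (k + 1)) ∧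
    ∀ k < m, ∃ σ : ℝ, (σ = β ∨ σ = -β) ∧
      ∀ x ∈ Set.Icc (s k) (s (k + 1)), g x = g (s k) + σ * (x - s k)

/-- `Feasible a b L f β g` : `g` is a feasible `β`-path over `[a, b]` for the corridor of
half-width `L` around the α-path `f`. -/
def Feasible (a b L : ℝ) (f : ℝ → ℝ) (β : ℝ) (g : ℝ → ℝ) : Prop :=
  PWLinSlope β a b g ∧ ∀ x ∈ Set.Icc a b, |g x - f x| ≤ L

namespace PWLinSlope

variable {β a b : ℝ} {g : ℝ → ℝ}

theorem abs_sub_le (hg : PWLinSlope β a b g) : |g b - g a| ≤ |β| * (b - a) := by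
  obtain ⟨m, s, rfl, rfl, hlt, haff⟩ := hg
  suffices ∀ k ≤ m, |g (s k) - g (s 0)| ≤ |β| * (s k - s 0) from this m le_rfl
  intro k
  induction k with
  | zero => simp
  | succ k ih =>
    intro hk
    obtain ⟨σ, hσ, hσg⟩ := haff k hk
    have hσβ : |σ| = |β| := by rcases hσ with rfl | rfl <;> simp
    have hstep : g (s (k + 1)) - g (s 0) = (g (s k) - g (s 0)) + σ * (s (k + 1) - s k) := by
      rw [hσg _ ⟨(hlt k hk).le, le_rfl⟩]; ring
    rw [hstep]
    calc |(g (s k) - g (s 0)) + σ * (s (k + 1) - s k)|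
        ≤ |g (s k) - g (s 0)| + |σ| * (s (k + 1) - s k) :=
          (abs_add_le _ _).trans_eq (by rw [abs_mul, abs_of_pos (sub_pos.2 (hlt k hk))])
      _ ≤ |β| * (s k - s 0) + |β| * (s (k + 1) - s k) := by
          rw [hσβ]; linarith [ih (Nat.le_of_succ_le hk)]
      _ = |β| * (s (k + 1) - s 0) := by ring

theorem of_affine {σ : ℝ} (hab : a < b) (hσ : σ = β ∨ σ = -β) (c : ℝ) :
    PWLinSlope β a b (fun x => c + (x - a) * σ) := by
  refine ⟨1, fun k => if k = 0 then a else b, by simp, by simp, ?_, ?_⟩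
  · intro k hk
    obtain rfl : k = 0 := by omega
    simpa using hab
  · intro k hk
    obtain rfl : k = 0 := by omega
    exact ⟨σ, hσ, fun x _ => by simp only [if_pos]; ring⟩

end PWLinSlope

theorem stmt_1_general
    (n : ℕ) (t h : ℕ → ℝ) (L : ℝ) (f : ℝ → ℝ)
    (ht : ∀ i < n, t i < t (i + 1))
    (hf : ∀ i < n, ∀ x ∈ Set.Icc (t i) (t (i + 1)),
      f x = h i + (x - t i) * ((h (i + 1) - h i) / (t (i + 1) - t i)))
    (i j : ℕ) (hij : i < j) (hjn : j < n)
    (hover : h i - h j > 2 * L)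
    (hvis : ∀ x ∈ Set.Icc (t i) (t j),
      |((h i - L) + (x - t i) * (((h j + L) - (h i - L)) / (t j - t i))) - f x| ≤ L) :
    IsLeast {β : ℝ | 0 ≤ β ∧ ∃ g : ℝ → ℝ, PWLinSlope β (t i) (t j) g ∧
        ∀ x ∈ Set.Icc (t i) (t j), |g x - f x| ≤ L}
      ((h i - h j - 2 * L) / (t j - t i)) ∧
    PWLinSlope ((h i - h j - 2 * L) / (t j - t i)) (t i) (t j)
      (fun x => (h i - L) + (x - t i) * (((h j + L) - (h i - L)) / (t j - t i))) := by
  have hab : t i < t j :=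
    strictMonoOn_Iic_of_lt_succ (fun m hm => ht m (by omega)) (Set.mem_Iic.2 (by omega))
      (Set.mem_Iic.2 hjn.le) hij
  have hlen : 0 < t j - t i := sub_pos.2 hab
  have hf_node : ∀ k < n, f (t k) = h k := fun k hk => by
    simpa using hf k hk (t k) ⟨le_rfl, (ht k hk).le⟩
  have hslope : ((h j + L) - (h i - L)) / (t j - t i) = -((h i - h j - 2 * L) / (t j - t i)) := by
    ring
  have hsegment := PWLinSlope.of_affine hab (Or.inr hslope) (h i - L)
  refine ⟨⟨⟨div_nonneg (by linarith) hlen.le, _, hsegment, hvis⟩, ?_⟩, hsegment⟩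
  rintro β ⟨hβ, g, hg, hcorr⟩
  have hstart := abs_le.1 (hf_node i (by omega) ▸ hcorr (t i) ⟨le_rfl, hab.le⟩)
  have hend := abs_le.1 (hf_node j hjn ▸ hcorr (t j) ⟨hab.le, le_rfl⟩)
  have hchange := abs_of_nonneg hβ ▸ hg.abs_sub_le
  have hdrop := neg_abs_le (g (t j) - g (t i))
  rw [div_le_iff₀ hlen]
  linarith

/-- for a visible overlapping pair (l_i, u_j), the minimum slope needed to
traverse C[i, j] is s(l_i, u_j) = (h i - h j - 2L)/(t j - t i), attained by the affine
function joining l_i = (t i, h i - L) to u_j = (t j, h j + L). -/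
theorem stmt_1
    (n : ℕ) (hn : 1 ≤ n) (t h : ℕ → ℝ) (α L : ℝ) (f : ℝ → ℝ)
    (hα : 0 < α) (hL : 0 < L)
    (ht : ∀ i < n, t i < t (i + 1))
    (hslope : ∀ i < n,
      h (i + 1) - h i = α * (t (i + 1) - t i) ∨ h (i + 1) - h i = -α * (t (i + 1) - t i))
    (halt : ∀ i, i + 1 < n → (h (i + 2) - h (i + 1)) * (h (i + 1) - h i) < 0)
    (hf : ∀ i < n, ∀ x ∈ Set.Icc (t i) (t (i + 1)),
      f x = h i + (x - t i) * ((h (i + 1) - h i) / (t (i + 1) - t i)))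
    (i j : ℕ) (hij : i < j) (hi0 : 0 < i) (hjn : j < n)
    (hlow : h (i - 1) < h i ∧ h (i + 1) < h i)
    (hup : h j < h (j - 1) ∧ h j < h (j + 1))
    (hover : h i - h j > 2 * L)
    (hvis : ∀ x ∈ Set.Icc (t i) (t j),
      |((h i - L) + (x - t i) * (((h j + L) - (h i - L)) / (t j - t i))) - f x| ≤ L) :
    IsLeast {β : ℝ | 0 ≤ β ∧ ∃ g : ℝ → ℝ, PWLinSlope β (t i) (t j) g ∧
        ∀ x ∈ Set.Icc (t i) (t j), |g x - f x| ≤ L}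
      ((h i - h j - 2 * L) / (t j - t i)) ∧
    PWLinSlope ((h i - h j - 2 * L) / (t j - t i)) (t i) (t j)
      (fun x => (h i - L) + (x - t i) * (((h j + L) - (h i - L)) / (t j - t i))) :=
  stmt_1_general n t h L f ht hf i j hij hjn hover hvis
end

section
/- Let i < j be indices such that i is a lower reflex index, j is an upper reflex index, and h_i − h_j > 2L, and suppose the pair (l_i, u_j) is NOT visible, i.e., the straight segment joining l_i = (t_i, h_i − L) and u_j = (t_j, h_j + L) is not contained in the corridor C. Then there exist a lower reflex index k and an upper reflex index m with t_i ≤ t_k ≤ t_j and t_i ≤ t_m ≤ t_j such that h_k − h_m > 2L and s(l_k, u_m) > s(l_i, u_j). -/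
lemma t_strict (n : ℕ) (t : ℕ → ℝ) (ht : ∀ i < n, t i < t (i + 1)) :
    ∀ p q, p < q → q ≤ n → t p < t q := by
  intro p q hpq hqn
  induction q with
  | zero => omega
  | succ q ih =>
    rcases Nat.lt_succ_iff_lt_or_eq.mp hpq with h1 | h1
    · exact (ih h1 (by omega)).trans (ht q (by omega))
    · subst h1; exact ht p (by omega)

lemma h_lip (n : ℕ) (t h : ℕ → ℝ) (α : ℝ) (hα : 0 < α)
    (ht : ∀ i < n, t i < t (i + 1))
    (hslope : ∀ i < n,
      h (i + 1) - h i = α * (t (i + 1) - t i) ∨ h (i + 1) - h i = -α * (t (i + 1) - t i)) :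
    ∀ p q, p ≤ q → q ≤ n → h p - h q ≤ α * (t q - t p) := by
  intro p q hpq hqn
  induction q with
  | zero => have : p = 0 := by omega
            subst this; simp
  | succ q ih =>
    rcases Nat.eq_or_lt_of_le hpq with h1 | h1
    · subst h1; simp
    · have h1 : p ≤ q := by omega
      have h2 := ih h1 (by omega)
      have h3 := hslope q (by omega)
      have h4 : t q < t (q + 1) := ht q (by omega)
      rcases h3 with h3 | h3 <;> nlinarith

lemma locate (n : ℕ) (t : ℕ → ℝ) (ht : ∀ i < n, t i < t (i + 1)) (i : ℕ) (x : ℝ)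
    (hx1 : t i ≤ x) :
    ∀ j, i < j → j ≤ n → x ≤ t j → ∃ p, i ≤ p ∧ p < j ∧ t p ≤ x ∧ x ≤ t (p + 1) := by
  intro j
  induction j with
  | zero => omega
  | succ j ih =>
    intro hij hjn hx2
    rcases Nat.lt_succ_iff_lt_or_eq.mp hij with h1 | h1
    · by_cases hc : x ≤ t j
      · obtain ⟨p, hp1, hp2, hp3, hp4⟩ := ih h1 (by omega) hc
        exact ⟨p, hp1, by omega, hp3, hp4⟩
      · exact ⟨j, by omega, by omega, le_of_not_ge hc, hx2⟩
    · subst h1; exact ⟨i, le_refl _, by omega, hx1, hx2⟩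

lemma affine_le_max (a b x c d : ℝ) (h1 : a ≤ x) (h2 : x ≤ b) :
    c + x * d ≤ max (c + a * d) (c + b * d) := by
  rcases le_total 0 d with hd | hd
  · exact le_max_of_le_right (by nlinarith)
  · exact le_max_of_le_left (by nlinarith)

/-- if an overlapping pair (l_i, u_j) is not visible, then there is an
overlapping pair of reflex points within C[i, j] with a strictly larger slope. -/
theorem stmt_2
    (n : ℕ) (hn : 1 ≤ n) (t h : ℕ → ℝ) (α L : ℝ) (f : ℝ → ℝ)
    (hα : 0 < α) (hL : 0 < L)
    (ht : ∀ i < n, t i < t (i + 1))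
    (hslope : ∀ i < n,
      h (i + 1) - h i = α * (t (i + 1) - t i) ∨ h (i + 1) - h i = -α * (t (i + 1) - t i))
    (halt : ∀ i, i + 1 < n → (h (i + 2) - h (i + 1)) * (h (i + 1) - h i) < 0)
    (hf : ∀ i < n, ∀ x ∈ Set.Icc (t i) (t (i + 1)),
      f x = h i + (x - t i) * ((h (i + 1) - h i) / (t (i + 1) - t i)))
    (i j : ℕ) (hij : i < j) (hi0 : 0 < i) (hin : i < n) (hj0 : 0 < j) (hjn : j < n)
    (hlow : h (i - 1) < h i ∧ h (i + 1) < h i)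
    (hup : h j < h (j - 1) ∧ h j < h (j + 1))
    (hover : h i - h j > 2 * L)
    (hnotvis : ¬ ∀ x ∈ Set.Icc (t i) (t j),
      |((h i - L) + (x - t i) * (((h j + L) - (h i - L)) / (t j - t i))) - f x| ≤ L) :
    ∃ k m : ℕ,
      (0 < k ∧ k < n ∧ h (k - 1) < h k ∧ h (k + 1) < h k) ∧
      (0 < m ∧ m < n ∧ h m < h (m - 1) ∧ h m < h (m + 1)) ∧
      t i ≤ t k ∧ t k ≤ t j ∧ t i ≤ t m ∧ t m ≤ t j ∧
      h k - h m > 2 * L ∧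
      (h k - h m - 2 * L) / |t k - t m| > (h i - h j - 2 * L) / |t i - t j| := by
  have tmono := t_strict n t ht
  have htij : t i < t j := tmono i j hij (by omega)
  have hDpos : (0:ℝ) < t j - t i := by linarith
  set sg : ℝ := ((h j + L) - (h i - L)) / (t j - t i) with hsg_def
  have sgD : sg * (t j - t i) = (h j + L) - (h i - L) := div_mul_cancel₀ _ (ne_of_gt hDpos)
  have hsg_neg : sg < 0 := by nlinarith
  have hlip := h_lip n t h α hα ht hslope i j (le_of_lt hij) (by omega)
  have hsg_gt : -α < sg := by nlinarith
  clear_value sg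
  set G : ℕ → ℝ := fun k => (h i - L) + (t k - t i) * sg with hG_def
  have hGk : ∀ k, G k = (h i - L) + (t k - t i) * sg := fun k => rfl
  have hGi : G i = h i - L := by rw [hGk]; ring
  have hGj : G j = h j + L := by rw [hGk]; nlinarith [sgD]
  clear_value G
  push_neg at hnotvis
  obtain ⟨x₀, ⟨hx₀1, hx₀2⟩, hgt⟩ := hnotvis
  obtain ⟨p, hip, hpj, hpx1, hpx2⟩ := locate n t ht i x₀ hx₀1 j hij (by omega) hx₀2
  have hpn : p < n := by omega
  have hΔp : (0:ℝ) < t (p + 1) - t p := by have := ht p hpn; linarith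
  set σ : ℝ := (h (p + 1) - h p) / (t (p + 1) - t p) with hσ_def
  have hfx : f x₀ = h p + (x₀ - t p) * σ := hf p hpn x₀ ⟨hpx1, hpx2⟩
  have hσD : σ * (t (p + 1) - t p) = h (p + 1) - h p := div_mul_cancel₀ _ (ne_of_gt hΔp)
  clear_value σ
  have hpmem : p ∈ Finset.Icc i j := Finset.mem_Icc.mpr ⟨hip, by omega⟩
  have hp1mem : p + 1 ∈ Finset.Icc i j := Finset.mem_Icc.mpr ⟨by omega, by omega⟩
  -- affine endpoint bounds
  have keyA : f x₀ - ((h i - L) + (x₀ - t i) * sg) ≤ max (h p - G p) (h (p + 1) - G (p + 1)) := by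
    have hb := affine_le_max (t p) (t (p + 1)) x₀
      (h p - t p * σ - (h i - L) + t i * sg) (σ - sg) hpx1 hpx2
    have e1 : h p - t p * σ - (h i - L) + t i * sg + t p * (σ - sg) = h p - G p := by
      rw [hGk]; ring
    have e2 : h p - t p * σ - (h i - L) + t i * sg + t (p + 1) * (σ - sg)
        = h (p + 1) - G (p + 1) := by
      rw [hGk]; linear_combination hσD
    rw [e1, e2] at hb
    calc f x₀ - ((h i - L) + (x₀ - t i) * sg)
        = h p - t p * σ - (h i - L) + t i * sg + x₀ * (σ - sg) := by rw [hfx]; ring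
      _ ≤ _ := hb
  have keyB : ((h i - L) + (x₀ - t i) * sg) - f x₀ ≤ max (G p - h p) (G (p + 1) - h (p + 1)) := by
    have hb := affine_le_max (t p) (t (p + 1)) x₀
      (-(h p - t p * σ - (h i - L) + t i * sg)) (sg - σ) hpx1 hpx2
    have e1 : -(h p - t p * σ - (h i - L) + t i * sg) + t p * (sg - σ) = G p - h p := by
      rw [hGk]; ring
    have e2 : -(h p - t p * σ - (h i - L) + t i * sg) + t (p + 1) * (sg - σ)
        = G (p + 1) - h (p + 1) := by
      rw [hGk]; linear_combination -hσD
    rw [e1, e2] at hb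
    calc ((h i - L) + (x₀ - t i) * sg) - f x₀
        = -(h p - t p * σ - (h i - L) + t i * sg) + x₀ * (sg - σ) := by rw [hfx]; ring
      _ ≤ _ := hb
  rcases lt_abs.mp hgt with hB | hA
  · -- segment goes above the corridor: new upper reflex m, pair (i, m)
    obtain ⟨m, hmmem, hmmax⟩ := Finset.exists_max_image (Finset.Icc i j)
      (fun k => G k - h k) ⟨i, Finset.mem_Icc.mpr ⟨le_refl i, hij.le⟩⟩
    obtain ⟨him, hmj⟩ := Finset.mem_Icc.mp hmmem
    have hφm : L < G m - h m := by
      have h1 : L < max (G p - h p) (G (p + 1) - h (p + 1)) := lt_of_lt_of_le (by linarith) keyB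
      rcases lt_max_iff.mp h1 with h2 | h2
      · exact lt_of_lt_of_le h2 (hmmax p hpmem)
      · exact lt_of_lt_of_le h2 (hmmax (p + 1) hp1mem)
    have him' : i < m := by
      rcases Nat.eq_or_lt_of_le him with hc | hc
      · exfalso; rw [← hc, hGi] at hφm; linarith
      · exact hc
    have hmj' : m < j := by
      rcases Nat.eq_or_lt_of_le hmj with hc | hc
      · exfalso; rw [hc, hGj] at hφm; linarith
      · exact hc
    obtain ⟨m', rfl⟩ : ∃ m', m = m' + 1 := ⟨m - 1, by omega⟩
    have hleft := hmmax m' (Finset.mem_Icc.mpr ⟨by omega, by omega⟩)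
    have hright := hmmax (m' + 2) (Finset.mem_Icc.mpr ⟨by omega, by omega⟩)
    have hΔl : (0:ℝ) < t (m' + 1) - t m' := by have := ht m' (by omega); linarith
    have hΔr : (0:ℝ) < t (m' + 2) - t (m' + 1) := by have := ht (m' + 1) (by omega); linarith
    have hGl : G (m' + 1) - G m' = (t (m' + 1) - t m') * sg := by rw [hGk, hGk]; ring
    have hGr : G (m' + 2) - G (m' + 1) = (t (m' + 2) - t (m' + 1)) * sg := by rw [hGk, hGk]; ring
    have hrefl1 : h (m' + 1) < h m' := by
      linarith [hleft, hGl, mul_neg_of_pos_of_neg hΔl hsg_neg]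
    have hrefl2 : h (m' + 1) < h (m' + 2) := by
      rcases hslope (m' + 1) (by omega) with hc | hc
      · linarith [hc, mul_pos hα hΔr]
      · exfalso
        linarith [hright, hGr, hc, mul_pos hΔr (show (0:ℝ) < sg + α by linarith)]
    have hΔim : (0:ℝ) < t (m' + 1) - t i := by
      have := tmono i (m' + 1) him' (by omega); linarith
    have hov : h i - h (m' + 1) - 2 * L > (-sg) * (t (m' + 1) - t i) := by
      rw [hGk] at hφm; linarith [hφm, sgD]
    refine ⟨i, m' + 1, ⟨hi0, hin, hlow.1, hlow.2⟩,
      ⟨by omega, by omega, hrefl1, hrefl2⟩,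
      le_refl _, htij.le, by linarith, (tmono (m' + 1) j hmj' (by omega)).le, ?_, ?_⟩
    · linarith [hov, mul_pos (neg_pos.mpr hsg_neg) hΔim]
    · have e2 : |t i - t j| = t j - t i := by rw [abs_sub_comm]; exact abs_of_pos hDpos
      have e1 : |t i - t (m' + 1)| = t (m' + 1) - t i := by
        rw [abs_sub_comm]; exact abs_of_pos hΔim
      have e3 : (h i - h j - 2 * L) / (t j - t i) = -sg := by
        rw [div_eq_iff (ne_of_gt hDpos)]; linarith [sgD]
      rw [e1, e2, e3, gt_iff_lt, lt_div_iff₀ hΔim]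
      linarith [hov]
  · -- segment goes below the corridor: new lower reflex k, pair (k, j)
    obtain ⟨k, hkmem, hkmax⟩ := Finset.exists_max_image (Finset.Icc i j)
      (fun k => h k - G k) ⟨i, Finset.mem_Icc.mpr ⟨le_refl i, hij.le⟩⟩
    obtain ⟨hik, hkj⟩ := Finset.mem_Icc.mp hkmem
    have hφk : L < h k - G k := by
      have h1 : L < max (h p - G p) (h (p + 1) - G (p + 1)) := lt_of_lt_of_le (by linarith) keyA
      rcases lt_max_iff.mp h1 with h2 | h2
      · exact lt_of_lt_of_le h2 (hkmax p hpmem)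
      · exact lt_of_lt_of_le h2 (hkmax (p + 1) hp1mem)
    have hik' : i < k := by
      rcases Nat.eq_or_lt_of_le hik with hc | hc
      · exfalso; rw [← hc, hGi] at hφk; linarith
      · exact hc
    have hkj' : k < j := by
      rcases Nat.eq_or_lt_of_le hkj with hc | hc
      · exfalso; rw [hc, hGj] at hφk; linarith
      · exact hc
    obtain ⟨k', rfl⟩ : ∃ k', k = k' + 1 := ⟨k - 1, by omega⟩
    have hleft := hkmax k' (Finset.mem_Icc.mpr ⟨by omega, by omega⟩)
    have hright := hkmax (k' + 2) (Finset.mem_Icc.mpr ⟨by omega, by omega⟩)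
    have hΔl : (0:ℝ) < t (k' + 1) - t k' := by have := ht k' (by omega); linarith
    have hΔr : (0:ℝ) < t (k' + 2) - t (k' + 1) := by have := ht (k' + 1) (by omega); linarith
    have hGl : G (k' + 1) - G k' = (t (k' + 1) - t k') * sg := by rw [hGk, hGk]; ring
    have hGr : G (k' + 2) - G (k' + 1) = (t (k' + 2) - t (k' + 1)) * sg := by rw [hGk, hGk]; ring
    have hrefl1 : h k' < h (k' + 1) := by
      rcases hslope k' (by omega) with hc | hc
      · linarith [hc, mul_pos hα hΔl]
      · exfalso
        linarith [hleft, hGl, hc, mul_pos hΔl (show (0:ℝ) < sg + α by linarith)]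
    have hrefl2 : h (k' + 2) < h (k' + 1) := by
      linarith [hright, hGr, mul_neg_of_pos_of_neg hΔr hsg_neg]
    have hΔkj : (0:ℝ) < t j - t (k' + 1) := by
      have := tmono (k' + 1) j hkj' (by omega); linarith
    have hov : h (k' + 1) - h j - 2 * L > (-sg) * (t j - t (k' + 1)) := by
      rw [hGk] at hφk; linarith [hφk, sgD]
    refine ⟨k' + 1, j, ⟨by omega, by omega, hrefl1, hrefl2⟩,
      ⟨hj0, hjn, hup.1, hup.2⟩,
      by linarith [tmono i (k' + 1) hik' (by omega)], by linarith, htij.le, le_refl _, ?_, ?_⟩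
    · linarith [hov, mul_pos (neg_pos.mpr hsg_neg) hΔkj]
    · have e2 : |t i - t j| = t j - t i := by rw [abs_sub_comm]; exact abs_of_pos hDpos
      have e1 : |t (k' + 1) - t j| = t j - t (k' + 1) := by
        rw [abs_sub_comm]; exact abs_of_pos hΔkj
      have e3 : (h i - h j - 2 * L) / (t j - t i) = -sg := by
        rw [div_eq_iff (ne_of_gt hDpos)]; linarith [sgD]
      rw [e1, e2, e3, gt_iff_lt, lt_div_iff₀ hΔkj]
      linarith [hov]
end

section
/- Let δ and β be reals with 0 ≤ δ ≤ β ≤ α. If there exists a feasible δ-path, then there exists a feasible β-path. -/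
open Set Relation

def SlopePiece (β : ℝ) (g : ℝ → ℝ) (x y : ℝ) : Prop :=
  x < y ∧ ∃ σ : ℝ, (σ = β ∨ σ = -β) ∧ ∀ z ∈ Icc x y, g z = g x + σ * (z - x)

theorem reflTransGen_of_forall_rel_succ {α : Type*} {R : α → α → Prop} {s : ℕ → α} {m : ℕ}
    (h : ∀ k < m, R (s k) (s (k + 1))) : ReflTransGen R (s 0) (s m) := by
  induction m with
  | zero => exact .refl
  | succ m ih => exact (ih fun k hk => h k (by omega)).tail (h m m.lt_succ_self)

theorem pwLinSlope_iff_reflTransGen {β a b : ℝ} {g : ℝ → ℝ} :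
    PWLinSlope β a b g ↔ ReflTransGen (SlopePiece β g) a b := by
  constructor
  · rintro ⟨m, s, rfl, rfl, hs, hg⟩
    exact reflTransGen_of_forall_rel_succ fun k hk => ⟨hs k hk, hg k hk⟩
  · intro h
    induction h with
    | refl => exact ⟨0, fun _ => a, rfl, rfl, by simp, by simp⟩
    | @tail b c _ hbc ih =>
      obtain ⟨m, s, hs0, hsm, hs, hg⟩ := ih
      refine ⟨m + 1, fun k => if k ≤ m then s k else c, by simpa using hs0, by simp,
        fun k hk => ?_, fun k hk => ?_⟩
      all_goals rcases (Nat.lt_succ_iff.1 hk).lt_or_eq with hk | rfl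
      · simpa [hk.le, Nat.succ_le_of_lt hk] using hs k hk
      · simpa [hsm] using hbc.1
      · simpa [hk.le, Nat.succ_le_of_lt hk] using hg k hk
      · simpa [hsm] using hbc.2

theorem SlopePiece.abs_sub {β a b : ℝ} {g : ℝ → ℝ} (h : SlopePiece β g a b) {x y : ℝ}
    (hx : x ∈ Icc a b) (hy : y ∈ Icc a b) : |g x - g y| = |β| * |x - y| := by
  obtain ⟨-, σ, hσ, hg⟩ := h
  have hσ' : |σ| = |β| := by rcases hσ with rfl | rfl <;> simp
  rw [hg x hx, hg y hy, ← hσ', ← abs_mul]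
  ring_nf

theorem abs_sub_le_of_Icc_union {g : ℝ → ℝ} {K a b c : ℝ} (hab : a ≤ b) (hbc : b ≤ c)
    (h₁ : ∀ x ∈ Icc a b, ∀ y ∈ Icc a b, |g x - g y| ≤ K * |x - y|)
    (h₂ : ∀ x ∈ Icc b c, ∀ y ∈ Icc b c, |g x - g y| ≤ K * |x - y|) :
    ∀ x ∈ Icc a c, ∀ y ∈ Icc a c, |g x - g y| ≤ K * |x - y| := by
  intro x hx y hy
  wlog hxy : x ≤ y generalizing x y
  · rw [abs_sub_comm, abs_sub_comm x]
    exact this y hy x hx (le_of_not_ge hxy)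
  rcases le_total y b with hyb | hby
  · exact h₁ x ⟨hx.1, hxy.trans hyb⟩ y ⟨hy.1, hyb⟩
  rcases le_total b x with hbx | hxb
  · exact h₂ x ⟨hbx, hx.2⟩ y ⟨hby, hy.2⟩
  calc |g x - g y| ≤ |g x - g b| + |g b - g y| := abs_sub_le _ _ _
    _ ≤ K * |x - b| + K * |b - y| :=
        add_le_add (h₁ x ⟨hx.1, hxb⟩ b ⟨hab, le_rfl⟩) (h₂ b ⟨le_rfl, hbc⟩ y ⟨hby, hy.2⟩)
    _ = K * |x - y| := by
        rw [abs_of_nonpos (by linarith), abs_of_nonpos (by linarith), abs_of_nonpos (by linarith)]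
        ring

theorem abs_sub_le_of_reflTransGen {β a b : ℝ} {g : ℝ → ℝ}
    (h : ReflTransGen (SlopePiece β g) a b) :
    ∀ x ∈ Icc a b, ∀ y ∈ Icc a b, |g x - g y| ≤ |β| * |x - y| := by
  induction h with
  | refl =>
    rintro x ⟨hx₁, hx₂⟩ y ⟨hy₁, hy₂⟩
    simp [le_antisymm hx₂ hx₁, le_antisymm hy₂ hy₁]
  | @tail b c hab hbc ih =>
    have hab' : a ≤ b := by
      simpa [reflTransGen_eq_self] using
        ReflTransGen.mono (fun _ _ (h : SlopePiece β g _ _) => h.1.le) _ _ hab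
    exact abs_sub_le_of_Icc_union hab' hbc.1.le ih fun x hx y hy => (hbc.abs_sub hx hy).le

theorem reflTransGen_slopePiece_of_eqOn_affine {β σ C a b : ℝ} {g : ℝ → ℝ} (hab : a ≤ b)
    (hσ : σ = β ∨ σ = -β) (hg : EqOn g (fun x => C + σ * x) (Icc a b)) :
    ReflTransGen (SlopePiece β g) a b := by
  rcases hab.eq_or_lt with rfl | hab
  · exact .refl
  · refine .single ⟨hab, σ, hσ, fun z hz => ?_⟩
    rw [hg hz, hg (left_mem_Icc.2 hab.le)]
    ring

theorem reflTransGen_slopePiece_of_eqOn_min {β A B a b : ℝ} {g : ℝ → ℝ} (hab : a ≤ b)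
    (hβ : 0 ≤ β) (hg : EqOn g (fun x => min (A + β * x) (B - β * x)) (Icc a b)) :
    ReflTransGen (SlopePiece β g) a b := by
  by_cases hBA : B - β * a ≤ A + β * a
  · refine reflTransGen_slopePiece_of_eqOn_affine (C := B) hab (Or.inr rfl) fun x hx => ?_
    have : β * a ≤ β * x := mul_le_mul_of_nonneg_left hx.1 hβ
    rw [hg hx]
    dsimp only
    rw [min_eq_right (by linarith)]
    ring
  by_cases hAB : A + β * b ≤ B - β * b
  · refine reflTransGen_slopePiece_of_eqOn_affine (C := A) hab (Or.inl rfl) fun x hx => ?_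
    have : β * x ≤ β * b := mul_le_mul_of_nonneg_left hx.2 hβ
    rw [hg hx]
    exact min_eq_left (by linarith)
  push Not at hBA hAB
  have hβ : 0 < β := hβ.lt_of_ne (by rintro rfl; linarith)
  set q := (B - A) / (2 * β) with hq
  have hqβ : 2 * β * q = B - A := by rw [hq]; field_simp
  have haq : a < q := by rw [hq, lt_div_iff₀ (by positivity)]; linarith
  have hqb : q < b := by rw [hq, div_lt_iff₀ (by positivity)]; linarith
  refine .trans
    (reflTransGen_slopePiece_of_eqOn_affine (C := A) haq.le (Or.inl rfl) fun x hx => ?_)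
    (reflTransGen_slopePiece_of_eqOn_affine (C := B) hqb.le (Or.inr rfl) fun x hx => ?_)
  · have : β * x ≤ β * q := mul_le_mul_of_nonneg_left hx.2 hβ.le
    rw [hg ⟨hx.1, hx.2.trans hqb.le⟩]
    exact min_eq_left (by linarith)
  · have : β * q ≤ β * x := mul_le_mul_of_nonneg_left hx.1 hβ.le
    rw [hg ⟨haq.le.trans hx.1, hx.2⟩]
    dsimp only
    rw [min_eq_right (by linarith)]
    ring

def coneEnvelope (β : ℝ) (p c : ℕ → ℝ) (n : ℕ) (x : ℝ) : ℝ :=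
  (Finset.range (n + 1)).inf' Finset.nonempty_range_add_one fun i => c i + β * |x - p i|

section coneEnvelope

variable {β : ℝ} {p c : ℕ → ℝ} {n : ℕ}

theorem coneEnvelope_le {i : ℕ} (hi : i ≤ n) (x : ℝ) :
    coneEnvelope β p c n x ≤ c i + β * |x - p i| :=
  Finset.inf'_le _ (Finset.mem_range_succ_iff.2 hi)

theorem le_coneEnvelope {x y : ℝ} (h : ∀ i ≤ n, y ≤ c i + β * |x - p i|) :
    y ≤ coneEnvelope β p c n x :=
  Finset.le_inf' _ _ fun i hi => h i (Finset.mem_range_succ_iff.1 hi)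

theorem exists_eqOn_min_coneEnvelope (hp : MonotoneOn p (Iic n)) {j : ℕ} (hj : j < n) :
    ∃ A B : ℝ, EqOn (coneEnvelope β p c n) (fun x => min (A + β * x) (B - β * x))
      (Icc (p j) (p (j + 1))) := by
  have hB : (Finset.Ico (j + 1) (n + 1)).Nonempty := ⟨j + 1, by simp [hj]⟩
  refine ⟨(Finset.range (j + 1)).inf' Finset.nonempty_range_add_one fun i => c i - β * p i,
    (Finset.Ico (j + 1) (n + 1)).inf' hB fun i => c i + β * p i, fun x hx => ?_⟩
  have hsplit : Finset.range (n + 1) = Finset.range (j + 1) ∪ Finset.Ico (j + 1) (n + 1) := by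
    ext i
    simp only [Finset.mem_range, Finset.mem_union, Finset.mem_Ico]
    omega
  rw [coneEnvelope, Finset.inf'_congr _ hsplit fun _ _ => rfl,
    Finset.inf'_union Finset.nonempty_range_add_one hB]
  congr 1
  · refine (Finset.inf'_congr _ rfl fun i hi => ?_).trans
      (map_finset_inf' (OrderIso.addRight (β * x)) _ _).symm
    have hpi : p i ≤ p j :=
      hp (mem_Iic.2 (by simp at hi; omega)) (mem_Iic.2 hj.le) (Finset.mem_range_succ_iff.1 hi)
    rw [Function.comp_apply, OrderIso.addRight_apply,
      abs_of_nonneg (sub_nonneg.2 (hpi.trans hx.1))]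
    ring
  · refine (Finset.inf'_congr _ rfl fun i hi => ?_).trans
      (map_finset_inf' (OrderIso.addRight (-(β * x))) _ _).symm
    obtain ⟨hi₁, hi₂⟩ := Finset.mem_Ico.1 hi
    have hpi : p (j + 1) ≤ p i := hp (mem_Iic.2 (by omega)) (mem_Iic.2 (by omega)) hi₁
    rw [Function.comp_apply, OrderIso.addRight_apply,
      abs_of_nonpos (sub_nonpos.2 (hx.2.trans hpi))]
    ring

theorem reflTransGen_coneEnvelope (hβ : 0 ≤ β) (hp : MonotoneOn p (Iic n)) :
    ReflTransGen (SlopePiece β (coneEnvelope β p c n)) (p 0) (p n) := by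
  rw [← reflTransGen_eq_self (r := ReflTransGen (SlopePiece β (coneEnvelope β p c n)))]
  refine reflTransGen_of_forall_rel_succ fun j hj => ?_
  obtain ⟨A, B, hAB⟩ := exists_eqOn_min_coneEnvelope (c := c) (β := β) hp hj
  exact reflTransGen_slopePiece_of_eqOn_min (hp (mem_Iic.2 hj.le) (mem_Iic.2 hj) j.le_succ) hβ hAB

end coneEnvelope

theorem Feasible.sub_le {a b L δ : ℝ} {f g : ℝ → ℝ} (hg : Feasible a b L f δ g) {x y : ℝ}
    (hx : x ∈ Icc a b) (hy : y ∈ Icc a b) : f x - f y ≤ 2 * L + |δ| * |x - y| := by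
  have hgx := abs_le.1 (hg.2 x hx)
  have hgy := abs_le.1 (hg.2 y hy)
  have hxy := abs_le.1 (abs_sub_le_of_reflTransGen (pwLinSlope_iff_reflTransGen.1 hg.1) x hx y hy)
  linarith

theorem exists_mem_Icc_succ {α : Type*} [LinearOrder α] {t : ℕ → α} {n : ℕ} (hn : 1 ≤ n) {x : α}
    (hx : x ∈ Icc (t 0) (t n)) : ∃ j < n, x ∈ Icc (t j) (t (j + 1)) := by
  induction n with
  | zero => omega
  | succ n ih =>
    by_cases h : 1 ≤ n ∧ x ≤ t n
    · obtain ⟨j, hj, hxj⟩ := ih h.1 ⟨hx.1, h.2⟩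
      exact ⟨j, by omega, hxj⟩
    · refine ⟨n, n.lt_succ_self, ?_, hx.2⟩
      rcases Nat.eq_zero_or_pos n with rfl | hn
      · exact hx.1
      · exact (lt_of_not_ge fun hxn => h ⟨hn, hxn⟩).le

theorem interp_apply_node {n : ℕ} {t h : ℕ → ℝ} {f : ℝ → ℝ} (hn : 1 ≤ n)
    (ht : ∀ i < n, t i < t (i + 1))
    (hf : ∀ i < n, ∀ x ∈ Icc (t i) (t (i + 1)),
      f x = h i + (x - t i) * ((h (i + 1) - h i) / (t (i + 1) - t i)))
    {i : ℕ} (hi : i ≤ n) : f (t i) = h i := by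
  rcases hi.lt_or_eq with hi | rfl
  · simpa using hf i hi (t i) ⟨le_rfl, (ht i hi).le⟩
  obtain ⟨k, rfl⟩ : ∃ k, i = k + 1 := ⟨i - 1, by omega⟩
  have hk : t (k + 1) - t k ≠ 0 := (sub_pos.2 (ht k k.lt_succ_self)).ne'
  rw [hf k k.lt_succ_self _ ⟨(ht k k.lt_succ_self).le, le_rfl⟩, mul_div_cancel₀ _ hk]
  ring

theorem min_cone_le_of_slope {a b ya yb α β x : ℝ} (hab : a < b) (hx : x ∈ Icc a b)
    (hβα : β ≤ α) (hslope : yb - ya = α * (b - a) ∨ yb - ya = -α * (b - a)) :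
    min (ya + β * |x - a|) (yb + β * |x - b|) ≤ ya + (x - a) * ((yb - ya) / (b - a)) := by
  have hba : b - a ≠ 0 := (sub_pos.2 hab).ne'
  rw [abs_of_nonneg (sub_nonneg.2 hx.1), abs_of_nonpos (sub_nonpos.2 hx.2)]
  rcases hslope with hs | hs <;> rw [hs, mul_div_cancel_right₀ _ hba]
  · have : β * (x - a) ≤ α * (x - a) := mul_le_mul_of_nonneg_right hβα (sub_nonneg.2 hx.1)
    exact (min_le_left _ _).trans (by linarith)
  · have : β * (b - x) ≤ α * (b - x) := mul_le_mul_of_nonneg_right hβα (sub_nonneg.2 hx.2)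
    exact (min_le_right _ _).trans (by linarith)

theorem stmt_3_general
    (n : ℕ) (hn : 1 ≤ n) (t h : ℕ → ℝ) (α L : ℝ) (f : ℝ → ℝ)
    (ht : ∀ i < n, t i < t (i + 1))
    (hslope : ∀ i < n,
      h (i + 1) - h i = α * (t (i + 1) - t i) ∨ h (i + 1) - h i = -α * (t (i + 1) - t i))
    (hf : ∀ i < n, ∀ x ∈ Set.Icc (t i) (t (i + 1)),
      f x = h i + (x - t i) * ((h (i + 1) - h i) / (t (i + 1) - t i)))
    (δ β : ℝ) (hδ : 0 ≤ δ) (hδβ : δ ≤ β) (hβα : β ≤ α)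
    (hex : ∃ g : ℝ → ℝ, Feasible (t 0) (t n) L f δ g) :
    ∃ g : ℝ → ℝ, Feasible (t 0) (t n) L f β g := by
  obtain ⟨g₀, hg₀⟩ := hex
  have ht_mono : MonotoneOn t (Iic n) := (strictMonoOn_Iic_of_lt_succ ht).monotoneOn
  have hnode : ∀ i ≤ n, t i ∈ Icc (t 0) (t n) := fun i hi =>
    ⟨ht_mono (Nat.zero_le n) hi (Nat.zero_le i), ht_mono hi (mem_Iic.2 le_rfl) hi⟩
  refine ⟨coneEnvelope β t (fun i => h i + L) n, pwLinSlope_iff_reflTransGen.2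
    (reflTransGen_coneEnvelope (hδ.trans hδβ) ht_mono), fun x hx => abs_le.2 ⟨?_, ?_⟩⟩
  · have : f x - L ≤ coneEnvelope β t (fun i => h i + L) n x := le_coneEnvelope fun i hi => by
      have := hg₀.sub_le hx (hnode i hi)
      rw [interp_apply_node hn ht hf hi, abs_of_nonneg hδ] at this
      linarith [mul_le_mul_of_nonneg_right hδβ (abs_nonneg (x - t i))]
    linarith
  · obtain ⟨j, hj, hxj⟩ := exists_mem_Icc_succ hn hx
    rw [hf j hj x hxj]
    rcases min_le_iff.1 (min_cone_le_of_slope (ht j hj) hxj hβα (hslope j hj)) with hle | hle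
    · linarith [coneEnvelope_le (β := β) (p := t) (c := fun i => h i + L) hj.le x]
    · linarith [coneEnvelope_le (β := β) (p := t) (c := fun i => h i + L) hj x]

/-- if there is a feasible δ-path and 0 ≤ δ ≤ β ≤ α, then
there is a feasible β-path. -/
theorem stmt_3
    (n : ℕ) (hn : 1 ≤ n) (t h : ℕ → ℝ) (α L : ℝ) (f : ℝ → ℝ)
    (hα : 0 < α) (hL : 0 < L)
    (ht : ∀ i < n, t i < t (i + 1))
    (hslope : ∀ i < n,
      h (i + 1) - h i = α * (t (i + 1) - t i) ∨ h (i + 1) - h i = -α * (t (i + 1) - t i))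
    (halt : ∀ i, i + 1 < n → (h (i + 2) - h (i + 1)) * (h (i + 1) - h i) < 0)
    (hf : ∀ i < n, ∀ x ∈ Set.Icc (t i) (t (i + 1)),
      f x = h i + (x - t i) * ((h (i + 1) - h i) / (t (i + 1) - t i)))
    (δ β : ℝ) (hδ : 0 ≤ δ) (hδβ : δ ≤ β) (hβα : β ≤ α)
    (hex : ∃ g : ℝ → ℝ, Feasible (t 0) (t n) L f δ g) :
    ∃ g : ℝ → ℝ, Feasible (t 0) (t n) L f β g :=
  stmt_3_general n hn t h α L f ht hslope hf δ β hδ hδβ hβα hex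
end

section
/- Let a < b with t_0 ≤ a and b ≤ t_n, let y_a, y_b ∈ ℝ, and let δ = (y_b − y_a)/(b − a). Suppose the straight segment from (a, y_a) to (b, y_b) lies in the corridor C, and let β satisfy |δ| ≤ β ≤ α. Then there exists a continuous piecewise-linear function g : [a, b] → ℝ, affine with slope in {β, −β} on each piece of some finite partition of [a, b], with g(a) = y_a, g(b) = y_b, and |g(t) − f(t)| ≤ L for all t ∈ [a, b]. -/
open Set

noncomputable section

def tri (c d w u r : ℝ) : ℝ := if r ≤ u then c * r else d * (w - r)

lemma tri_zero (c d w u : ℝ) (hu : 0 ≤ u) : tri c d w u 0 = 0 := by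
  simp [tri, hu]

lemma tri_left (c d w : ℝ) {u r : ℝ} (h : r ≤ u) : tri c d w u r = c * r := if_pos h

lemma tri_right (c d : ℝ) {w u r : ℝ} (hkey : d * (w - u) = c * u) (h : u ≤ r) :
    tri c d w u r = d * (w - r) := by
  unfold tri
  split_ifs with h'
  · have : r = u := le_antisymm h' h
    rw [this, hkey]
  · rfl

lemma tri_nonneg {c d w u : ℝ} (hc : 0 < c) (hd : 0 < d) {r : ℝ} (h0 : 0 ≤ r) (hw : r ≤ w) :
    0 ≤ tri c d w u r := by
  unfold tri; split_ifs <;> nlinarith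

lemma tri_le {c d w u : ℝ} (hc : 0 < c) (hd : 0 < d) (hkey : d * (w - u) = c * u)
    {r : ℝ} (h0 : 0 ≤ r) (hw : r ≤ w) : tri c d w u r ≤ c * u := by
  unfold tri; split_ifs with h
  · nlinarith
  · push_neg at h; nlinarith

set_option maxHeartbeats 2000000 in
lemma zigzag (α L β δ a b ya : ℝ) (f : ℝ → ℝ)
    (hα : 0 < α) (hL : 0 < L) (hab : a < b)
    (hδ : |δ| < β) (hβα : β ≤ α)
    (hlip : ∀ x ∈ Set.Icc a b, ∀ y ∈ Set.Icc a b, |f y - f x| ≤ α * |y - x|)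
    (hseg : ∀ x ∈ Set.Icc a b, |(ya + (x - a) * δ) - f x| ≤ L) :
    ∃ g : ℝ → ℝ, (∃ m : ℕ, ∃ s : ℕ → ℝ, s 0 = a ∧ s m = b ∧ (∀ k < m, s k < s (k + 1)) ∧
      ∀ k < m, ∃ σ : ℝ, (σ = β ∨ σ = -β) ∧
        ∀ x ∈ Set.Icc (s k) (s (k + 1)), g x = g (s k) + σ * (x - s k)) ∧
      g a = ya ∧ g b = ya + (b - a) * δ ∧ ∀ x ∈ Set.Icc a b, |g x - f x| ≤ L := by
  classical
  have hβ : 0 < β := lt_of_le_of_lt (abs_nonneg δ) hδ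
  obtain ⟨hd2', hd1'⟩ := abs_lt.1 hδ
  have hd1 : 0 < β - δ := by linarith
  have hd2 : 0 < β + δ := by linarith
  -- number of teeth
  set N : ℕ := max 1 ⌈3 * α * (b - a) / (2 * L)⌉₊ with hNdef
  have hN0 : 0 < N := lt_of_lt_of_le one_pos (le_max_left _ _)
  have hNR : (0:ℝ) < N := by exact_mod_cast hN0
  set w : ℝ := (b - a) / N with hwdef
  have hw : 0 < w := div_pos (by linarith) hNR
  have hNw : (N:ℝ) * w = b - a := by
    rw [hwdef]; field_simp
  have h3w : 3 * α * w ≤ 2 * L := by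
    have h1 : 3 * α * (b - a) / (2 * L) ≤ (N:ℝ) := by
      refine le_trans (Nat.le_ceil _) ?_
      exact_mod_cast le_max_right 1 ⌈3 * α * (b - a) / (2 * L)⌉₊
    have h2 : 3 * α * (b - a) ≤ 2 * L * N := by
      rw [div_le_iff₀ (by linarith : (0:ℝ) < 2 * L)] at h1
      linarith [h1]
    rw [hwdef, ← mul_div_assoc, div_le_iff₀ hNR]
    linarith [h2]
  set u : ℝ := (β + δ) * w / (2 * β) with hudef
  have hu0 : 0 < u := div_pos (mul_pos hd2 hw) (by linarith)
  have huw : u < w := by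
    rw [hudef, div_lt_iff₀ (by linarith : (0:ℝ) < 2 * β)]
    nlinarith
  have hkey : (β + δ) * (w - u) = (β - δ) * u := by
    rw [hudef]; field_simp; ring
  have h2H : 2 * ((β - δ) * u) ≤ β * w := by
    have h : (β - δ) * u * (2 * β) = (β ^ 2 - δ ^ 2) * w := by
      rw [hudef]; field_simp; ring
    nlinarith [sq_nonneg δ, mul_pos hβ hw]
  clear_value u w N
  -- the zigzag construction
  set Tup : ℝ → ℝ := tri (β - δ) (β + δ) w u with hTupdef
  set Dn : ℝ → ℝ := tri (β + δ) (β - δ) w (w - u) with hDndef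
  have hkeyD : (β - δ) * (w - (w - u)) = (β + δ) * (w - u) := by
    rw [hkey]; ring
  set p : ℕ → ℝ := fun k => a + k * w with hpdef
  set goodUp : ℕ → Prop :=
    fun k => ∀ x ∈ Set.Icc (p k) (p (k + 1)), (ya + (x - a) * δ) - f x ≤ L - Tup (x - p k)
    with hgooddef
  set g : ℝ → ℝ := fun x => (ya + (x - a) * δ) +
    (if goodUp (⌊(x - a) / w⌋.toNat) then Tup (x - a - ⌊(x - a) / w⌋ * w)
     else -(Dn (x - a - ⌊(x - a) / w⌋ * w))) with hgdef
  have hfloor : ∀ (k : ℕ) (x : ℝ), a + k * w ≤ x → x < a + ((k:ℝ) + 1) * w →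
      ⌊(x - a) / w⌋ = (k : ℤ) := by
    intro k x h1 h2
    rw [Int.floor_eq_iff]
    constructor
    · push_cast
      rw [le_div_iff₀ hw]
      linarith
    · push_cast
      rw [div_lt_iff₀ hw]
      linarith
  have gval : ∀ (x : ℝ) (k : ℕ), ⌊(x - a) / w⌋ = (k : ℤ) →
      g x = (ya + (x - a) * δ) +
        (if goodUp k then Tup (x - p k) else -(Dn (x - p k))) := by
    intro x k hk
    rw [hgdef]
    simp only [hk, Int.toNat_natCast]
    have he : x - a - ((k:ℤ):ℝ) * w = x - p k := by
      rw [hpdef]; push_cast; ring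
    rw [he]
  have hfloornode : ∀ k : ℕ, k ≤ N → ⌊((a + k * w) - a) / w⌋ = (k : ℤ) := by
    intro k hk
    have : ((a + k * w) - a) / w = (k : ℝ) := by
      field_simp; ring
    rw [this, Int.floor_natCast]
  have gnode : ∀ k : ℕ, k ≤ N → g (a + k * w) = ya + ((a + k * w) - a) * δ := by
    intro k hk
    rw [gval _ k (hfloornode k hk)]
    have h0 : (a + k * w) - p k = 0 := by rw [hpdef]; ring
    rw [h0]
    split_ifs
    · rw [hTupdef, tri_zero _ _ _ _ hu0.le]; ring
    · rw [hDndef, tri_zero _ _ _ _ (by linarith : (0:ℝ) ≤ w - u)]; ring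
  have hpk : ∀ k : ℕ, p k = a + (k:ℝ) * w := fun k => by rw [hpdef]
  have hpk1 : ∀ k : ℕ, p (k + 1) = p k + w := by
    intro k; rw [hpdef]; push_cast; ring
  have legUp1 : ∀ k : ℕ, k < N → goodUp k → ∀ x ∈ Set.Icc (p k) (p k + u),
      g x = g (p k) + β * (x - p k) := by
    intro k hk hgk x hx
    obtain ⟨hx1, hx2⟩ := hx
    have hx1' : a + (k:ℝ) * w ≤ x := by rw [← hpk k]; exact hx1
    have hfl : ⌊(x - a) / w⌋ = (k : ℤ) := by
      refine hfloor k x hx1' ?_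
      have h2 : p k + u < a + ((k:ℝ) + 1) * w := by rw [hpk k]; linarith
      linarith
    rw [gval x k hfl, if_pos hgk, hTupdef,
      tri_left _ _ _ (by linarith : x - p k ≤ u), hpk k, gnode k (by omega)]
    ring
  have legUp2 : ∀ k : ℕ, k < N → goodUp k → ∀ x ∈ Set.Icc (p k + u) (p (k + 1)),
      g x = g (p k + u) + (-β) * (x - (p k + u)) := by
    intro k hk hgk x hx
    obtain ⟨hx1, hx2⟩ := hx
    have hupk : g (p k + u) = ya + ((p k + u) - a) * δ + (β - δ) * u := by
      have hfl : ⌊((p k + u) - a) / w⌋ = (k : ℤ) := by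
        refine hfloor k _ (by rw [hpk k]; linarith) (by rw [hpk k]; push_cast; linarith)
      rw [gval _ k hfl, if_pos hgk, hTupdef]
      have he : p k + u - p k = u := by ring
      rw [he, tri_left _ _ _ (le_refl u)]
    have hgx : g x = ya + (x - a) * δ + (β + δ) * (p (k + 1) - x) := by
      rcases eq_or_lt_of_le hx2 with he | hlt
      · rw [he, hpk (k + 1), gnode (k + 1) (by omega)]
        ring
      · have hfl : ⌊(x - a) / w⌋ = (k : ℤ) := by
          refine hfloor k x ?_ ?_
          · rw [← hpk k]; linarith
          · have := hlt
            rw [hpk1 k, hpk k] at this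
            push_cast; linarith
        rw [gval x k hfl, if_pos hgk, hTupdef,
          tri_right _ _ hkey (by linarith : u ≤ x - p k), hpk1 k]
        ring
    rw [hgx, hupk, hpk1 k]
    linear_combination hkey
  have legDn1 : ∀ k : ℕ, k < N → ¬goodUp k → ∀ x ∈ Set.Icc (p k) (p k + (w - u)),
      g x = g (p k) + (-β) * (x - p k) := by
    intro k hk hgk x hx
    obtain ⟨hx1, hx2⟩ := hx
    have hx1' : a + (k:ℝ) * w ≤ x := by rw [← hpk k]; exact hx1
    have hfl : ⌊(x - a) / w⌋ = (k : ℤ) := by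
      refine hfloor k x hx1' ?_
      have h2 : p k + (w - u) < a + ((k:ℝ) + 1) * w := by rw [hpk k]; linarith
      linarith
    rw [gval x k hfl, if_neg hgk, hDndef,
      tri_left _ _ _ (by linarith : x - p k ≤ w - u), hpk k, gnode k (by omega)]
    ring
  have legDn2 : ∀ k : ℕ, k < N → ¬goodUp k → ∀ x ∈ Set.Icc (p k + (w - u)) (p (k + 1)),
      g x = g (p k + (w - u)) + β * (x - (p k + (w - u))) := by
    intro k hk hgk x hx
    obtain ⟨hx1, hx2⟩ := hx
    have hupk : g (p k + (w - u)) = ya + ((p k + (w - u)) - a) * δ - (β + δ) * (w - u) := by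
      have hfl : ⌊((p k + (w - u)) - a) / w⌋ = (k : ℤ) := by
        refine hfloor k _ (by rw [hpk k]; linarith) (by rw [hpk k]; push_cast; linarith)
      rw [gval _ k hfl, if_neg hgk, hDndef]
      have he : p k + (w - u) - p k = w - u := by ring
      rw [he, tri_left _ _ _ (le_refl (w - u))]
      ring
    have hgx : g x = ya + (x - a) * δ - (β - δ) * (p (k + 1) - x) := by
      rcases eq_or_lt_of_le hx2 with he | hlt
      · rw [he, hpk (k + 1), gnode (k + 1) (by omega)]
        ring
      · have hfl : ⌊(x - a) / w⌋ = (k : ℤ) := by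
          refine hfloor k x ?_ ?_
          · rw [← hpk k]; linarith
          · have := hlt
            rw [hpk1 k, hpk k] at this
            push_cast; linarith
        rw [gval x k hfl, if_neg hgk, hDndef,
          tri_right _ _ hkeyD (by linarith : w - u ≤ x - p k), hpk1 k]
        ring
    rw [hgx, hupk, hpk1 k]
    linear_combination hkey
  clear_value g goodUp p Dn Tup
  have hga : g a = ya := by
    have h := gnode 0 (by omega)
    norm_num at h
    exact h
  have hgb : g b = ya + (b - a) * δ := by
    have h := gnode N le_rfl
    rw [show a + (N:ℝ) * w = b by linarith [hNw]] at h
    exact h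
  refine ⟨g, ⟨2 * N, fun j => p (j / 2) +
      (if j % 2 = 1 then (if goodUp (j / 2) then u else w - u) else 0), ?_, ?_, ?_, ?_⟩,
    hga, hgb, ?_⟩
  · norm_num [hpk 0]
  · have e1 : (2 * N) / 2 = N := by omega
    have e2 : ¬((2 * N) % 2 = 1) := by omega
    simp only [e1, if_neg e2, hpk N]
    linarith [hNw]
  · intro j hj
    rcases Nat.even_or_odd j with ⟨k, hk⟩ | ⟨k, hk⟩
    · subst hk
      have e1 : (k + k) / 2 = k := by omega
      have e2 : ¬((k + k) % 2 = 1) := by omega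
      have e3 : (k + k + 1) / 2 = k := by omega
      have e4 : (k + k + 1) % 2 = 1 := by omega
      simp only [e1, e3, if_neg e2, if_pos e4]
      split_ifs <;> linarith
    · subst hk
      have e1 : (2 * k + 1) / 2 = k := by omega
      have e2 : (2 * k + 1) % 2 = 1 := by omega
      have e3 : (2 * k + 1 + 1) / 2 = k + 1 := by omega
      have e4 : ¬((2 * k + 1 + 1) % 2 = 1) := by omega
      simp only [e1, e3, if_pos e2, if_neg e4]
      rw [hpk1 k]
      split_ifs <;> linarith
  · intro j hj
    rcases Nat.even_or_odd j with ⟨k, hk⟩ | ⟨k, hk⟩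
    · subst hk
      have hkN : k < N := by omega
      have e1 : (k + k) / 2 = k := by omega
      have e2 : ¬((k + k) % 2 = 1) := by omega
      have e3 : (k + k + 1) / 2 = k := by omega
      have e4 : (k + k + 1) % 2 = 1 := by omega
      simp only [e1, e3, if_neg e2, if_pos e4, add_zero]
      by_cases hgk : goodUp k
      · refine ⟨β, Or.inl rfl, ?_⟩
        rw [if_pos hgk]
        intro x hx
        exact legUp1 k hkN hgk x hx
      · refine ⟨-β, Or.inr rfl, ?_⟩
        rw [if_neg hgk]
        intro x hx
        exact legDn1 k hkN hgk x hx
    · subst hk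
      have hkN : k < N := by omega
      have e1 : (2 * k + 1) / 2 = k := by omega
      have e2 : (2 * k + 1) % 2 = 1 := by omega
      have e3 : (2 * k + 1 + 1) / 2 = k + 1 := by omega
      have e4 : ¬((2 * k + 1 + 1) % 2 = 1) := by omega
      simp only [e1, e3, if_pos e2, if_neg e4, add_zero]
      by_cases hgk : goodUp k
      · refine ⟨-β, Or.inr rfl, ?_⟩
        rw [if_pos hgk]
        intro x hx
        exact legUp2 k hkN hgk x hx
      · refine ⟨β, Or.inl rfl, ?_⟩
        rw [if_neg hgk]
        intro x hx
        exact legDn2 k hkN hgk x hx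
  · intro x hx
    obtain ⟨hxa, hxb⟩ := hx
    rcases eq_or_lt_of_le hxb with he | hlt
    · rw [he, hgb]
      exact hseg b ⟨hab.le, le_refl b⟩
    · have h0 : (0:ℤ) ≤ ⌊(x - a) / w⌋ := Int.floor_nonneg.2 (div_nonneg (by linarith) hw.le)
      obtain ⟨k, hfl⟩ : ∃ k : ℕ, ⌊(x - a) / w⌋ = (k : ℤ) :=
        ⟨⌊(x - a) / w⌋.toNat, (Int.toNat_of_nonneg h0).symm⟩
      have hk1 : (k:ℝ) ≤ (x - a) / w := by
        have h := Int.floor_le ((x - a) / w)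
        rw [hfl] at h
        exact_mod_cast h
      have hk2 : (x - a) / w < (k:ℝ) + 1 := by
        have h := Int.lt_floor_add_one ((x - a) / w)
        rw [hfl] at h
        exact_mod_cast h
      have hx1 : p k ≤ x := by
        rw [hpk k]
        rw [le_div_iff₀ hw] at hk1
        linarith
      have hx2 : x < p (k + 1) := by
        rw [hpk (k + 1)]
        rw [div_lt_iff₀ hw] at hk2
        push_cast
        linarith
      have hkN : k < N := by
        by_contra hcon
        push_neg at hcon
        have hc : (N:ℝ) ≤ (k:ℝ) := Nat.cast_le.mpr hcon
        have h2 : (N:ℝ) * w ≤ (k:ℝ) * w := mul_le_mul_of_nonneg_right hc hw.le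
        have : b ≤ p k := by rw [hpk k]; linarith [hNw]
        linarith
      have hsub : ∀ y, p k ≤ y → y ≤ p (k + 1) → y ∈ Set.Icc a b := by
        intro y hy1 hy2
        have ha1 : a ≤ p k := by
          rw [hpk k]
          have := mul_nonneg (Nat.cast_nonneg (α := ℝ) k) hw.le
          linarith
        have hb1 : p (k + 1) ≤ b := by
          rw [hpk (k + 1)]
          have hk1N : ((k:ℝ) + 1) ≤ (N:ℝ) := by
            have : ((k + 1 : ℕ) : ℝ) ≤ ((N : ℕ) : ℝ) := Nat.cast_le.mpr (by omega)
            push_cast at this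
            linarith
          have h2 : ((k:ℝ) + 1) * w ≤ (N:ℝ) * w := mul_le_mul_of_nonneg_right hk1N hw.le
          push_cast
          linarith [hNw]
        exact ⟨by linarith, by linarith⟩
      have hr1 : 0 ≤ x - p k := by linarith
      have hr2 : x - p k ≤ w := by have := hpk1 k; linarith
      have hβw : β * w ≤ α * w := mul_le_mul_of_nonneg_right hβα hw.le
      rw [gval x k hfl]
      by_cases hgk : goodUp k
      · rw [if_pos hgk]
        have hT0 : 0 ≤ Tup (x - p k) := by
          rw [hTupdef]; exact tri_nonneg hd1 hd2 hr1 hr2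
        simp only [hgooddef] at hgk
        have hTle : ya + (x - a) * δ - f x ≤ L - Tup (x - p k) := hgk x ⟨hx1, hx2.le⟩
        have hlow : -L ≤ ya + (x - a) * δ - f x := (abs_le.1 (hseg x ⟨hxa, hxb⟩)).1
        rw [abs_le]
        constructor <;> linarith
      · rw [if_neg hgk]
        simp only [hgooddef] at hgk
        push_neg at hgk
        obtain ⟨x0, hx0mem, hx0⟩ := hgk
        obtain ⟨hx01, hx02⟩ := hx0mem
        have hx0ab : x0 ∈ Set.Icc a b := hsub x0 hx01 hx02
        have hx0r1 : 0 ≤ x0 - p k := by linarith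
        have hx0r2 : x0 - p k ≤ w := by have := hpk1 k; linarith
        have hTuple : Tup (x0 - p k) ≤ (β - δ) * u := by
          rw [hTupdef]; exact tri_le hd1 hd2 hkey hx0r1 hx0r2
        have hDnle : Dn (x - p k) ≤ (β - δ) * u := by
          rw [hDndef]
          have h := tri_le hd2 hd1 hkeyD hr1 hr2
          linarith [hkey]
        have hDn0 : 0 ≤ Dn (x - p k) := by
          rw [hDndef]; exact tri_nonneg hd2 hd1 hr1 hr2
        have hxx0 : |x - x0| ≤ w := by
          rw [abs_le]
          have := hpk1 k
          exact ⟨by linarith, by linarith⟩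
        have hfw : |f x - f x0| ≤ α * w := by
          refine le_trans (hlip x0 hx0ab x ⟨hxa, hxb⟩) ?_
          exact mul_le_mul_of_nonneg_left hxx0 hα.le
        have hsw : |(ya + (x - a) * δ) - (ya + (x0 - a) * δ)| ≤ w * β := by
          rw [show (ya + (x - a) * δ) - (ya + (x0 - a) * δ) = (x - x0) * δ by ring, abs_mul]
          exact mul_le_mul hxx0 hδ.le (abs_nonneg δ) hw.le
        have hup : ya + (x - a) * δ - f x ≤ L := (abs_le.1 (hseg x ⟨hxa, hxb⟩)).2
        have hfw' := abs_le.1 hfw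
        have hsw' := abs_le.1 hsw
        rw [abs_le]
        constructor
        · linarith [hx0, hTuple, hDnle, h2H, h3w, hβw, hfw'.2, hsw'.1]
        · linarith

lemma f_lip (n : ℕ) (t h : ℕ → ℝ) (α : ℝ) (f : ℝ → ℝ) (hα : 0 < α)
    (ht : ∀ i < n, t i < t (i + 1))
    (hslope : ∀ i < n,
      h (i + 1) - h i = α * (t (i + 1) - t i) ∨ h (i + 1) - h i = -α * (t (i + 1) - t i))
    (hf : ∀ i < n, ∀ x ∈ Set.Icc (t i) (t (i + 1)),
      f x = h i + (x - t i) * ((h (i + 1) - h i) / (t (i + 1) - t i))) :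
    ∀ j, j ≤ n → ∀ x y, t 0 ≤ x → x ≤ y → y ≤ t j → |f y - f x| ≤ α * (y - x) := by
  have piece : ∀ i < n, ∀ x ∈ Set.Icc (t i) (t (i + 1)), ∀ y ∈ Set.Icc (t i) (t (i + 1)),
      |f y - f x| ≤ α * |y - x| := by
    intro i hi x hx y hy
    have hti : t i < t (i + 1) := ht i hi
    have hd : t (i + 1) - t i ≠ 0 := by linarith
    rw [hf i hi x hx, hf i hi y hy]
    have he : h i + (y - t i) * ((h (i + 1) - h i) / (t (i + 1) - t i)) -
        (h i + (x - t i) * ((h (i + 1) - h i) / (t (i + 1) - t i))) =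
        (y - x) * ((h (i + 1) - h i) / (t (i + 1) - t i)) := by ring
    rw [he, abs_mul]
    have hq : |(h (i + 1) - h i) / (t (i + 1) - t i)| = α := by
      rcases hslope i hi with hs | hs <;> rw [hs]
      · rw [mul_div_assoc, div_self hd, mul_one, abs_of_pos hα]
      · rw [mul_div_assoc, div_self hd, mul_one, abs_neg, abs_of_pos hα]
    rw [hq, mul_comm]
  intro j
  induction j with
  | zero =>
    intro _ x y h1 h2 h3
    have hxy : x = y := le_antisymm h2 (by linarith)
    subst hxy; simp
  | succ j ih =>
    intro hjn x y h1 h2 h3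
    have hjn' : j ≤ n := by omega
    have hjlt : j < n := by omega
    rcases le_or_gt y (t j) with hy | hy
    · exact ih hjn' x y h1 h2 hy
    · have hyI : y ∈ Set.Icc (t j) (t (j + 1)) := ⟨hy.le, h3⟩
      rcases le_or_gt (t j) x with hx | hx
      · have := piece j hjlt x ⟨hx, le_trans h2 h3⟩ y hyI
        rwa [abs_of_nonneg (by linarith : (0:ℝ) ≤ y - x)] at this
      · have hA := piece j hjlt (t j) ⟨le_refl _, (ht j hjlt).le⟩ y hyI
        rw [abs_of_nonneg (by linarith : (0:ℝ) ≤ y - t j)] at hA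
        have hB := ih hjn' x (t j) h1 hx.le (le_refl _)
        calc |f y - f x| ≤ |f y - f (t j)| + |f (t j) - f x| := abs_sub_le _ _ _
          _ ≤ α * (y - t j) + α * (t j - x) := add_le_add hA hB
          _ = α * (y - x) := by ring

/-- if the segment from (a, y_a) to (b, y_b) lies in the corridor and
|δ| ≤ β ≤ α (δ its slope), then there is a piecewise-linear path with slopes ±β from
(a, y_a) to (b, y_b) staying in the corridor. -/
theorem stmt_4
    (n : ℕ) (hn : 1 ≤ n) (t h : ℕ → ℝ) (α L : ℝ) (f : ℝ → ℝ)
    (hα : 0 < α) (hL : 0 < L)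
    (ht : ∀ i < n, t i < t (i + 1))
    (hslope : ∀ i < n,
      h (i + 1) - h i = α * (t (i + 1) - t i) ∨ h (i + 1) - h i = -α * (t (i + 1) - t i))
    (halt : ∀ i, i + 1 < n → (h (i + 2) - h (i + 1)) * (h (i + 1) - h i) < 0)
    (hf : ∀ i < n, ∀ x ∈ Set.Icc (t i) (t (i + 1)),
      f x = h i + (x - t i) * ((h (i + 1) - h i) / (t (i + 1) - t i)))
    (a b ya yb : ℝ) (hab : a < b) (ha : t 0 ≤ a) (hb : b ≤ t n)
    (β : ℝ) (hδβ : |(yb - ya) / (b - a)| ≤ β) (hβα : β ≤ α)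
    (hseg : ∀ x ∈ Set.Icc a b,
      |(ya + (x - a) * ((yb - ya) / (b - a))) - f x| ≤ L) :
    ∃ g : ℝ → ℝ, PWLinSlope β a b g ∧ g a = ya ∧ g b = yb ∧
      ∀ x ∈ Set.Icc a b, |g x - f x| ≤ L := by
  have hba : b - a ≠ 0 := by linarith
  have hyb : ya + (b - a) * ((yb - ya) / (b - a)) = yb := by field_simp; ring
  have hβ0 : 0 ≤ β := le_trans (abs_nonneg _) hδβ
  rcases eq_or_lt_of_le hδβ with heq | hlt
  · -- |δ| = β : the segment itself works
    refine ⟨fun x => ya + (x - a) * ((yb - ya) / (b - a)),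
      ⟨1, fun k => if k = 0 then a else b, by simp, by simp, ?_, ?_⟩, by simp, hyb, hseg⟩
    · intro k hk
      interval_cases k
      simpa using hab
    · intro k hk
      interval_cases k
      refine ⟨(yb - ya) / (b - a), ?_, ?_⟩
      · rcases (abs_eq hβ0).1 heq with hc | hc
        · exact Or.inl hc
        · exact Or.inr hc
      · intro x hx
        simp only [if_pos rfl, reduceIte]
        ring
  · -- |δ| < β : zigzag
    have hlip : ∀ x ∈ Set.Icc a b, ∀ y ∈ Set.Icc a b, |f y - f x| ≤ α * |y - x| := by
      have key := f_lip n t h α f hα ht hslope hf n le_rfl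
      intro x hx y hy
      rcases le_total x y with hxy | hxy
      · have := key x y (le_trans ha hx.1) hxy (le_trans hy.2 hb)
        rw [abs_of_nonneg (by linarith : (0:ℝ) ≤ y - x)]
        exact this
      · have := key y x (le_trans ha hy.1) hxy (le_trans hx.2 hb)
        rw [abs_sub_comm (f y) (f x), abs_of_nonpos (by linarith : y - x ≤ 0)]
        linarith [this]
    obtain ⟨g, hg1, hg2, hg3, hg4⟩ := zigzag α L β ((yb - ya) / (b - a)) a b ya f
      hα hL hab hlt hβα hlip hseg
    exact ⟨g, hg1, hg2, by rw [hg3, hyb], hg4⟩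
end
end

section
/- Assume there exists at least one pair of indices i, j ∈ {0, …, n} with h_i − h_j > 2L, and let β* be the maximum over all such pairs of (h_i − h_j − 2L)/|t_i − t_j|. Then for every β with 0 ≤ β ≤ α, a feasible β-path exists if and only if β ≥ β*. In particular, β* is the minimum slope for which the corridor can be traversed. -/
lemma seg_le {u v x c0 d C : ℝ} (h1 : u ≤ x) (h2 : x ≤ v) (hA : c0 ≤ C)
    (hB : c0 + d * (v - u) ≤ C) : c0 + d * (x - u) ≤ C := by
  rcases le_or_gt d 0 with hd | hd
  · nlinarith
  · nlinarith

lemma pwlin_lipschitz {β a b : ℝ} {g : ℝ → ℝ} (hβ : 0 ≤ β)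
    (h : PWLinSlope β a b g) :
    ∀ x y, a ≤ x → x ≤ y → y ≤ b → |g y - g x| ≤ β * (y - x) := by
  obtain ⟨m, s, hs0, hsm, hmono, hpiece⟩ := h
  have key : ∀ k, k ≤ m → ∀ x y, s 0 ≤ x → x ≤ y → y ≤ s k →
      |g y - g x| ≤ β * (y - x) := by
    intro k
    induction k with
    | zero =>
      intro _ x y hx hxy hy
      have : x = y := le_antisymm hxy (le_trans hy hx)
      simp [this]
    | succ k ih =>
      intro hk x y hx hxy hy
      have hkm : k < m := hk
      have hkm' : k ≤ m := le_of_lt hkm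
      rcases le_or_gt y (s k) with hys | hys
      · exact ih hkm' x y hx hxy hys
      obtain ⟨σ, hσ, hval⟩ := hpiece k hkm
      have habs : |σ| = β := by rcases hσ with h' | h' <;> simp [h', abs_of_nonneg hβ]
      rcases le_or_gt (s k) x with hsx | hsx
      · have hgx := hval x ⟨hsx, le_trans hxy hy⟩
        have hgy := hval y ⟨le_of_lt hys, hy⟩
        have : g y - g x = σ * (y - x) := by rw [hgx, hgy]; ring
        rw [this, abs_mul, habs, abs_of_nonneg (by linarith)]
      · have hgy := hval y ⟨le_of_lt hys, hy⟩
        have hgk : |g y - g (s k)| ≤ β * (y - s k) := by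
          have : g y - g (s k) = σ * (y - s k) := by rw [hgy]; ring
          rw [this, abs_mul, habs, abs_of_nonneg (by linarith)]
        have h2 := ih hkm' x (s k) hx (le_of_lt hsx) le_rfl
        calc |g y - g x| ≤ |g y - g (s k)| + |g (s k) - g x| := abs_sub_le _ _ _
          _ ≤ β * (y - s k) + β * (s k - x) := add_le_add hgk h2
          _ = β * (y - x) := by ring
  intro x y hx hxy hy
  exact key m le_rfl x y (hs0 ▸ hx) hxy (hsm ▸ hy)

lemma pwlin_of_finset {β a b : ℝ} {g : ℝ → ℝ}
    (T : Finset ℝ) (haT : a ∈ T) (hbT : b ∈ T) (hT : ∀ x ∈ T, a ≤ x ∧ x ≤ b)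
    (hcons : ∀ u v : ℝ, u ∈ T → v ∈ T → u < v → (∀ w ∈ T, w ≤ u ∨ v ≤ w) →
      ∃ σ : ℝ, (σ = β ∨ σ = -β) ∧ ∀ x ∈ Set.Icc u v, g x = g u + σ * (x - u)) :
    PWLinSlope β a b g := by
  classical
  set l := T.sort (· ≤ ·) with hl
  have hsort : l.SortedLT := Finset.sortedLT_sort T
  have hmem : ∀ x, x ∈ l ↔ x ∈ T := fun x => Finset.mem_sort _
  have hlen : 0 < l.length := by
    have : a ∈ l := (hmem a).mpr haT
    exact List.length_pos_iff.mpr (List.ne_nil_of_mem this)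
  have hmono : StrictMono l.get := hsort.strictMono_get
  set m := l.length - 1 with hm
  have hml : m + 1 = l.length := Nat.succ_pred_eq_of_pos hlen
  set s : ℕ → ℝ := fun k => l.getD k b with hs
  have hsget : ∀ k (hk : k < l.length), s k = l.get ⟨k, hk⟩ := by
    intro k hk; simp only [hs]
    rw [List.getD_eq_getElem l b hk, List.get_eq_getElem]
  have hsT : ∀ k, k < l.length → s k ∈ T := by
    intro k hk; rw [hsget k hk]; exact (hmem _).mp (l.get_mem _)
  have hsmono : ∀ i j, i < j → j < l.length → s i < s j := by
    intro i j hij hj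
    rw [hsget i (lt_trans hij hj), hsget j hj]
    exact hmono (by exact_mod_cast hij)
  -- s 0 = a
  have hs0 : s 0 = a := by
    obtain ⟨⟨j, hj⟩, hja⟩ := List.get_of_mem ((hmem a).mpr haT)
    have h1 : a ≤ s 0 := (hT _ (hsT 0 hlen)).1
    have h2 : s 0 ≤ a := by
      rw [hsget 0 hlen, ← hja]
      exact hmono.monotone (by exact_mod_cast Nat.zero_le j)
    exact le_antisymm h2 h1
  have hsmr : s m = b := by
    have hmlt : m < l.length := by omega
    obtain ⟨⟨j, hj⟩, hjb⟩ := List.get_of_mem ((hmem b).mpr hbT)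
    have h1 : s m ≤ b := (hT _ (hsT m hmlt)).2
    have h2 : b ≤ s m := by
      rw [hsget m hmlt, ← hjb]
      exact hmono.monotone (by simp; omega)
    exact le_antisymm h1 h2
  refine ⟨m, s, hs0, hsmr, fun k hk => hsmono k (k+1) (by omega) (by omega), ?_⟩
  intro k hk
  have hk1 : k + 1 < l.length := by omega
  have hkl : k < l.length := by omega
  refine hcons (s k) (s (k+1)) (hsT k hkl) (hsT (k+1) hk1)
    (hsmono k (k+1) (by omega) hk1) ?_
  intro w hw
  obtain ⟨⟨j, hj⟩, hjw⟩ := List.get_of_mem ((hmem w).mpr hw)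
  rcases le_or_gt j k with hjk | hjk
  · left; rw [← hjw, hsget k hkl]; exact hmono.monotone (by exact_mod_cast hjk)
  · right; rw [← hjw, hsget (k+1) hk1]; exact hmono.monotone (by exact_mod_cast hjk)

lemma pwlin_max {β a b : ℝ} {g1 g2 : ℝ → ℝ} (hβ : 0 < β)
    (h1 : PWLinSlope β a b g1) (h2 : PWLinSlope β a b g2) :
    PWLinSlope β a b (fun x => max (g1 x) (g2 x)) := by
  classical
  obtain ⟨m1, s1, hs10, hs1m, hmono1, hp1⟩ := h1
  obtain ⟨m2, s2, hs20, hs2m, hmono2, hp2⟩ := h2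
  have hmono1' : ∀ i j, i ≤ j → j ≤ m1 → s1 i ≤ s1 j := by
    intro i j hij hj
    induction j with
    | zero => simp_all
    | succ j ih =>
      rcases Nat.eq_or_lt_of_le hij with h | h
      · simp [h]
      · exact le_trans (ih (by omega) (by omega)) (le_of_lt (hmono1 j (by omega)))
  have hmono2' : ∀ i j, i ≤ j → j ≤ m2 → s2 i ≤ s2 j := by
    intro i j hij hj
    induction j with
    | zero => simp_all
    | succ j ih =>
      rcases Nat.eq_or_lt_of_le hij with h | h
      · simp [h]
      · exact le_trans (ih (by omega) (by omega)) (le_of_lt (hmono2 j (by omega)))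
  have hab : a ≤ b := by rw [← hs10, ← hs1m]; exact hmono1' 0 m1 (Nat.zero_le _) le_rfl
  have hp1' : ∀ k, ∃ σ : ℝ, (σ = β ∨ σ = -β) ∧ (k < m1 →
      ∀ x ∈ Set.Icc (s1 k) (s1 (k+1)), g1 x = g1 (s1 k) + σ * (x - s1 k)) := by
    intro k
    by_cases hk : k < m1
    · obtain ⟨σ, hσ, hv⟩ := hp1 k hk; exact ⟨σ, hσ, fun _ => hv⟩
    · exact ⟨β, Or.inl rfl, fun h => absurd h hk⟩
  have hp2' : ∀ k, ∃ σ : ℝ, (σ = β ∨ σ = -β) ∧ (k < m2 →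
      ∀ x ∈ Set.Icc (s2 k) (s2 (k+1)), g2 x = g2 (s2 k) + σ * (x - s2 k)) := by
    intro k
    by_cases hk : k < m2
    · obtain ⟨σ, hσ, hv⟩ := hp2 k hk; exact ⟨σ, hσ, fun _ => hv⟩
    · exact ⟨β, Or.inl rfl, fun h => absurd h hk⟩
  choose σ1 hσ1 hv1 using hp1'
  choose σ2 hσ2 hv2 using hp2'
  set cross : ℕ → ℕ → ℝ := fun k k' =>
    (g2 (s2 k') - σ2 k' * s2 k' - g1 (s1 k) + σ1 k * s1 k) / (σ1 k - σ2 k') with hcross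
  set T : Finset ℝ := {a, b} ∪
    ((Finset.range (m1+1)).image s1 ∪ (Finset.range (m2+1)).image s2 ∪
      (((Finset.range m1) ×ˢ (Finset.range m2)).image (fun p => cross p.1 p.2))).filter
      (fun x => a ≤ x ∧ x ≤ b) with hTdef
  have haT : a ∈ T := by simp [hTdef]
  have hbT : b ∈ T := by simp [hTdef]
  have hT : ∀ x ∈ T, a ≤ x ∧ x ≤ b := by
    intro x hx
    simp only [hTdef, Finset.mem_union, Finset.mem_insert, Finset.mem_singleton,
      Finset.mem_filter] at hx
    rcases hx with (rfl | rfl) | ⟨_, hx⟩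
    · exact ⟨le_rfl, hab⟩
    · exact ⟨hab, le_rfl⟩
    · exact hx
  have hs1T : ∀ k, k ≤ m1 → s1 k ∈ T := by
    intro k hk
    have h1 : a ≤ s1 k := by rw [← hs10]; exact hmono1' 0 k (Nat.zero_le _) hk
    have h2 : s1 k ≤ b := by rw [← hs1m]; exact hmono1' k m1 hk le_rfl
    simp only [hTdef, Finset.mem_union, Finset.mem_filter, Finset.mem_image,
      Finset.mem_range]
    exact Or.inr ⟨Or.inl (Or.inl ⟨k, by omega, rfl⟩), h1, h2⟩
  have hs2T : ∀ k, k ≤ m2 → s2 k ∈ T := by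
    intro k hk
    have h1 : a ≤ s2 k := by rw [← hs20]; exact hmono2' 0 k (Nat.zero_le _) hk
    have h2 : s2 k ≤ b := by rw [← hs2m]; exact hmono2' k m2 hk le_rfl
    simp only [hTdef, Finset.mem_union, Finset.mem_filter, Finset.mem_image,
      Finset.mem_range]
    exact Or.inr ⟨Or.inl (Or.inr ⟨k, by omega, rfl⟩), h1, h2⟩
  refine pwlin_of_finset T haT hbT hT ?_
  intro u v hu hv huv hgap
  obtain ⟨hau, hub⟩ := hT u hu
  obtain ⟨hav, hvb⟩ := hT v hv
  -- find piece of g1 containing [u,v]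
  have hfind : ∀ (m : ℕ) (s : ℕ → ℝ), s 0 = a → s m = b →
      (∀ i j, i ≤ j → j ≤ m → s i ≤ s j) → (∀ k, k ≤ m → s k ∈ T) →
      ∃ K, K < m ∧ s K ≤ u ∧ v ≤ s (K+1) := by
    intro m s hsa hsb hmono hsT
    set K := Nat.findGreatest (fun k => s k ≤ u) m with hK
    have hP0 : s 0 ≤ u := by rw [hsa]; exact hau
    have hKle : K ≤ m := Nat.findGreatest_le m
    have hPK : s K ≤ u := by
      have := Nat.findGreatest_spec (P := fun k => s k ≤ u) (Nat.zero_le m) hP0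
      simpa [← hK] using this
    have hKm : K < m := by
      rcases Nat.eq_or_lt_of_le hKle with h | h
      · exfalso
        have : s K = b := by rw [h, hsb]
        have : b ≤ u := this ▸ hPK
        linarith
      · exact h
    have hnP : ¬ (s (K+1) ≤ u) :=
      Nat.findGreatest_is_greatest (P := fun k => s k ≤ u) (n := m) (k := K+1)
        (by omega) (by omega)
    push_neg at hnP
    rcases hgap (s (K+1)) (hsT (K+1) (by omega)) with h | h
    · linarith
    · exact ⟨K, hKm, hPK, h⟩
  obtain ⟨K, hKm, hKu, hKv⟩ := hfind m1 s1 hs10 hs1m hmono1' hs1T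
  obtain ⟨K', hKm', hKu', hKv'⟩ := hfind m2 s2 hs20 hs2m hmono2' hs2T
  have e1 : ∀ x ∈ Set.Icc u v, g1 x = g1 u + σ1 K * (x - u) := by
    intro x hx
    have hxI : x ∈ Set.Icc (s1 K) (s1 (K+1)) := ⟨le_trans hKu hx.1, le_trans hx.2 hKv⟩
    have huI : u ∈ Set.Icc (s1 K) (s1 (K+1)) := ⟨hKu, le_trans (le_of_lt huv) hKv⟩
    rw [hv1 K hKm x hxI, hv1 K hKm u huI]; ring
  have e2 : ∀ x ∈ Set.Icc u v, g2 x = g2 u + σ2 K' * (x - u) := by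
    intro x hx
    have hxI : x ∈ Set.Icc (s2 K') (s2 (K'+1)) := ⟨le_trans hKu' hx.1, le_trans hx.2 hKv'⟩
    have huI : u ∈ Set.Icc (s2 K') (s2 (K'+1)) := ⟨hKu', le_trans (le_of_lt huv) hKv'⟩
    rw [hv2 K' hKm' x hxI, hv2 K' hKm' u huI]; ring
  set σ := σ1 K with hσdef
  set σ' := σ2 K' with hσ'def
  by_cases hss : σ = σ'
  · refine ⟨σ, hσ1 K, ?_⟩
    intro x hx
    show max (g1 x) (g2 x) = max (g1 u) (g2 u) + σ * (x - u)
    rw [e1 x hx, e2 x hx, ← hss, max_add_add_right]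
  · -- crossing point
    set xs := cross K K' with hxsdef
    have hssne : σ - σ' ≠ 0 := sub_ne_zero_of_ne hss
    have hx0 : (σ - σ') * (xs - u) = g2 u - g1 u := by
      have hg1u : g1 u = g1 (s1 K) + σ * (u - s1 K) :=
        hv1 K hKm u ⟨hKu, le_trans (le_of_lt huv) hKv⟩
      have hg2u : g2 u = g2 (s2 K') + σ' * (u - s2 K') :=
        hv2 K' hKm' u ⟨hKu', le_trans (le_of_lt huv) hKv'⟩
      have : (σ - σ') * xs = g2 (s2 K') - σ' * s2 K' - g1 (s1 K) + σ * s1 K := by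
        rw [hxsdef, hcross]
        beta_reduce
        rw [← hσdef, ← hσ'def, ← mul_div_assoc, mul_div_cancel_left₀ _ hssne]
      rw [hg1u, hg2u]
      linear_combination this
    have hd : ∀ x ∈ Set.Icc u v, g1 x - g2 x = (σ - σ') * (x - xs) := by
      intro x hx
      rw [e1 x hx, e2 x hx]
      linear_combination hx0
    have hside : xs ≤ u ∨ v ≤ xs := by
      by_cases hxsI : a ≤ xs ∧ xs ≤ b
      · have hxsT : xs ∈ T := by
          simp only [hTdef, Finset.mem_union, Finset.mem_filter, Finset.mem_image,
            Finset.mem_product, Finset.mem_range]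
          exact Or.inr ⟨Or.inr ⟨(K, K'), ⟨hKm, hKm'⟩, rfl⟩, hxsI⟩
        exact hgap xs hxsT
      · push_neg at hxsI
        rcases le_or_gt a xs with h | h
        · right; exact le_trans hvb (le_of_lt (hxsI h))
        · left; linarith
    have hcase1 : (∀ x ∈ Set.Icc u v, g2 x ≤ g1 x) →
        ∃ σ0 : ℝ, (σ0 = β ∨ σ0 = -β) ∧ ∀ x ∈ Set.Icc u v,
          (fun x => max (g1 x) (g2 x)) x = (fun x => max (g1 x) (g2 x)) u + σ0 * (x - u) := by
      intro hle
      refine ⟨σ, hσ1 K, fun x hx => ?_⟩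
      show max (g1 x) (g2 x) = max (g1 u) (g2 u) + σ * (x - u)
      rw [max_eq_left (hle x hx), max_eq_left (hle u ⟨le_rfl, le_of_lt huv⟩), e1 x hx]
    have hcase2 : (∀ x ∈ Set.Icc u v, g1 x ≤ g2 x) →
        ∃ σ0 : ℝ, (σ0 = β ∨ σ0 = -β) ∧ ∀ x ∈ Set.Icc u v,
          (fun x => max (g1 x) (g2 x)) x = (fun x => max (g1 x) (g2 x)) u + σ0 * (x - u) := by
      intro hle
      refine ⟨σ', hσ2 K', fun x hx => ?_⟩
      show max (g1 x) (g2 x) = max (g1 u) (g2 u) + σ' * (x - u)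
      rw [max_eq_right (hle x hx), max_eq_right (hle u ⟨le_rfl, le_of_lt huv⟩), e2 x hx]
    have hsgn : σ - σ' = 2*β ∨ σ - σ' = -(2*β) := by
      have h1 := hσ1 K
      have h2 := hσ2 K'
      rw [← hσdef] at h1
      rw [← hσ'def] at h2
      rcases h1 with h | h <;> rcases h2 with h' | h'
      · exact absurd (h.trans h'.symm) hss
      · left; rw [h, h']; ring
      · right; rw [h, h']; ring
      · exact absurd (h.trans h'.symm) hss
    rcases hsgn with hsgn | hsgn <;> rcases hside with hside | hside
    · exact hcase1 (fun x hx => by nlinarith [hd x hx, hx.1, hx.2])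
    · exact hcase2 (fun x hx => by nlinarith [hd x hx, hx.1, hx.2])
    · exact hcase2 (fun x hx => by nlinarith [hd x hx, hx.1, hx.2])
    · exact hcase1 (fun x hx => by nlinarith [hd x hx, hx.1, hx.2])

lemma pwlin_tent {β a b c K : ℝ} (hβ : 0 < β) (hab : a < b) :
    PWLinSlope β a b (fun x => K - β * |x - c|) := by
  rcases le_or_gt c a with hc | hc
  · refine ⟨1, fun k => if k = 0 then a else b, by simp, by simp, ?_, ?_⟩
    · intro k hk; interval_cases k; simpa using hab
    · intro k hk; interval_cases k
      refine ⟨-β, Or.inr rfl, ?_⟩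
      intro x hx
      norm_num at hx ⊢
      rw [abs_of_nonneg (by linarith [hx.1] : (0:ℝ) ≤ x - c),
        abs_of_nonneg (by linarith : (0:ℝ) ≤ a - c)]
      ring
  · rcases le_or_gt b c with hcb | hcb
    · refine ⟨1, fun k => if k = 0 then a else b, by simp, by simp, ?_, ?_⟩
      · intro k hk; interval_cases k; simpa using hab
      · intro k hk; interval_cases k
        refine ⟨β, Or.inl rfl, ?_⟩
        intro x hx
        norm_num at hx ⊢
        rw [abs_of_nonpos (by linarith [hx.2] : x - c ≤ 0),
          abs_of_nonpos (by linarith : a - c ≤ 0)]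
        ring
    · refine ⟨2, fun k => if k = 0 then a else if k = 1 then c else b, by simp, by simp, ?_, ?_⟩
      · intro k hk; interval_cases k <;> simp_all
      · intro k hk; interval_cases k
        · refine ⟨β, Or.inl rfl, ?_⟩
          intro x hx
          norm_num at hx ⊢
          rw [abs_of_nonpos (by linarith [hx.2] : x - c ≤ 0),
            abs_of_nonpos (by linarith : a - c ≤ 0)]
          ring
        · refine ⟨-β, Or.inr rfl, ?_⟩
          intro x hx
          norm_num at hx ⊢
          rw [abs_of_nonneg (by linarith [hx.1] : (0:ℝ) ≤ x - c)]
          ring_nf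

noncomputable def tentMax (β L : ℝ) (t h : ℕ → ℝ) : ℕ → ℝ → ℝ
  | 0 => fun x => h 0 - L - β * |x - t 0|
  | (N+1) => fun x => max (tentMax β L t h N x) (h (N+1) - L - β * |x - t (N+1)|)

lemma tentMax_pwlin (β L a b : ℝ) (t h : ℕ → ℝ) (hβ : 0 < β) (hab : a < b) (N : ℕ) :
    PWLinSlope β a b (tentMax β L t h N) := by
  induction N with
  | zero => exact pwlin_tent hβ hab
  | succ N ih => exact pwlin_max hβ ih (pwlin_tent hβ hab)

lemma tentMax_ge (β L : ℝ) (t h : ℕ → ℝ) (N : ℕ) (x : ℝ) :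
    ∀ i ≤ N, h i - L - β * |x - t i| ≤ tentMax β L t h N x := by
  induction N with
  | zero => intro i hi; interval_cases i; exact le_rfl
  | succ N ih =>
    intro i hi
    rcases Nat.eq_or_lt_of_le hi with h1 | h1
    · subst h1; exact le_max_right _ _
    · exact le_trans (ih i (by omega)) (le_max_left _ _)

lemma tentMax_le (β L : ℝ) (t h : ℕ → ℝ) (N : ℕ) (x C : ℝ)
    (hC : ∀ i ≤ N, h i - L - β * |x - t i| ≤ C) : tentMax β L t h N x ≤ C := by
  induction N with
  | zero => exact hC 0 le_rfl
  | succ N ih =>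
    exact max_le (ih (fun i hi => hC i (by omega))) (hC (N+1) le_rfl)

lemma exists_piece (t : ℕ → ℝ) (x : ℝ) (hx1 : t 0 ≤ x) :
    ∀ n : ℕ, 1 ≤ n → x ≤ t n → ∃ j < n, t j ≤ x ∧ x ≤ t (j+1) := by
  intro n
  induction n with
  | zero => omega
  | succ m ih =>
    intro _ hx2
    rcases Nat.eq_zero_or_pos m with rfl | hm
    · exact ⟨0, by omega, hx1, hx2⟩
    · rcases le_or_gt x (t m) with hxm | hxm
      · obtain ⟨j, hj, h1, h2⟩ := ih hm hxm
        exact ⟨j, by omega, h1, h2⟩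
      · exact ⟨m, by omega, le_of_lt hxm, hx2⟩


/-- if β* is the largest slope among all overlapping pairs, then for every
0 ≤ β ≤ α a feasible β-path exists iff β ≥ β*; so β* is the minimum feasible slope. -/
theorem stmt_5
    (n : ℕ) (hn : 1 ≤ n) (t h : ℕ → ℝ) (α L : ℝ) (f : ℝ → ℝ)
    (hα : 0 < α) (hL : 0 < L)
    (ht : ∀ i < n, t i < t (i + 1))
    (hslope : ∀ i < n,
      h (i + 1) - h i = α * (t (i + 1) - t i) ∨ h (i + 1) - h i = -α * (t (i + 1) - t i))
    (halt : ∀ i, i + 1 < n → (h (i + 2) - h (i + 1)) * (h (i + 1) - h i) < 0)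
    (hf : ∀ i < n, ∀ x ∈ Set.Icc (t i) (t (i + 1)),
      f x = h i + (x - t i) * ((h (i + 1) - h i) / (t (i + 1) - t i)))
    (βstar : ℝ)
    (hβstar : IsGreatest {s : ℝ | ∃ i ≤ n, ∃ j ≤ n,
      h i - h j > 2 * L ∧ s = (h i - h j - 2 * L) / |t i - t j|} βstar) :
    ∀ β : ℝ, 0 ≤ β → β ≤ α →
      ((∃ g : ℝ → ℝ, Feasible (t 0) (t n) L f β g) ↔ βstar ≤ β) := by
  -- grid monotonicity
  have tmono : ∀ i j, i ≤ j → j ≤ n → t i ≤ t j := by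
    intro i j hij hj
    induction j with
    | zero => simp_all
    | succ j ihj =>
      rcases Nat.eq_or_lt_of_le hij with h1 | h1
      · simp [h1]
      · exact le_trans (ihj (by omega) (by omega)) (le_of_lt (ht j (by omega)))
  have tmonos : ∀ i j, i < j → j ≤ n → t i < t j := by
    intro i j hij hj
    exact lt_of_le_of_lt (tmono i (j-1) (by omega) (by omega))
      (by have := ht (j-1) (by omega); rwa [Nat.sub_add_cancel (by omega)] at this)
  have t0n : t 0 < t n := tmonos 0 n hn le_rfl
  -- grid values of f
  have fgrid : ∀ i ≤ n, f (t i) = h i := by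
    intro i hi
    rcases Nat.eq_or_lt_of_le hi with h1 | h1
    · subst h1
      have hj : i - 1 < i := by omega
      have hi1 : i - 1 + 1 = i := by omega
      have := hf (i-1) (by omega) (t i) ⟨le_of_lt (tmonos (i-1) i hj le_rfl), by rw [hi1]⟩
      rw [hi1] at this
      rw [this]
      have hne : t i - t (i-1) ≠ 0 := ne_of_gt (sub_pos.mpr (tmonos (i-1) i hj le_rfl))
      field_simp
      ring
    · have := hf i h1 (t i) ⟨le_rfl, le_of_lt (ht i h1)⟩
      simp at this
      exact this
  have tne : ∀ i ≤ n, ∀ j ≤ n, i ≠ j → |t i - t j| > 0 := by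
    intro i hi j hj hij
    rcases Nat.lt_or_ge i j with h1 | h1
    · exact abs_pos.mpr (sub_ne_zero_of_ne (ne_of_lt (tmonos i j h1 hj)))
    · exact abs_pos.mpr (sub_ne_zero_of_ne (ne_of_gt (tmonos j i (by omega) hi)))
  have hβstarpos : 0 < βstar := by
    obtain ⟨i, hi, j, hj, hij, hrep⟩ := hβstar.1
    have hine : i ≠ j := by intro h'; rw [h'] at hij; linarith
    have := tne i hi j hj hine
    rw [hrep]
    exact div_pos (by linarith) this
  intro β hβ0 hβα
  constructor
  · -- forward: feasible ⇒ βstar ≤ β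
    rintro ⟨g, hgpw, hgc⟩
    obtain ⟨i, hi, j, hj, hij, hrep⟩ := hβstar.1
    have hine : i ≠ j := by intro h'; rw [h'] at hij; linarith
    have habs := tne i hi j hj hine
    have hlip := pwlin_lipschitz hβ0 hgpw
    have hgi : |g (t i) - f (t i)| ≤ L := hgc (t i) ⟨tmono 0 i (Nat.zero_le _) hi, tmono i n hi le_rfl⟩
    have hgj : |g (t j) - f (t j)| ≤ L := hgc (t j) ⟨tmono 0 j (Nat.zero_le _) hj, tmono j n hj le_rfl⟩
    rw [fgrid i hi] at hgi
    rw [fgrid j hj] at hgj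
    have hgi' : h i - L ≤ g (t i) := by have := abs_le.mp hgi; linarith [this.1]
    have hgj' : g (t j) ≤ h j + L := by have := abs_le.mp hgj; linarith [(abs_le.mp hgj).2]
    have hlb : |g (t i) - g (t j)| ≤ β * |t i - t j| := by
      rcases Nat.lt_or_ge i j with h1 | h1
      · rw [abs_sub_comm (g (t i)) (g (t j)), abs_sub_comm (t i) (t j),
          abs_of_nonneg (by linarith [tmonos i j h1 hj] : (0:ℝ) ≤ t j - t i)]
        exact hlip (t i) (t j) (tmono 0 i (Nat.zero_le _) hi) (le_of_lt (tmonos i j h1 hj))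
          (tmono j n hj le_rfl)
      · have h2 : j < i := by omega
        rw [abs_of_nonneg (by linarith [tmonos j i h2 hi] : 0 ≤ t i - t j)]
        exact hlip (t j) (t i) (tmono 0 j (Nat.zero_le _) hj) (le_of_lt (tmonos j i h2 hi))
          (tmono i n hi le_rfl)
    have key : h i - h j - 2*L ≤ β * |t i - t j| := by
      have h1 : g (t i) - g (t j) ≤ |g (t i) - g (t j)| := le_abs_self _
      linarith
    rw [hrep, div_le_iff₀ habs]
    linarith
  · -- backward: βstar ≤ β ⇒ feasible
    intro hββ
    have hβpos : 0 < β := lt_of_lt_of_le hβstarpos hββ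
    have hpair : ∀ i ≤ n, ∀ k ≤ n, h i - h k - 2*L ≤ β * |t i - t k| := by
      intro i hi k hk
      by_cases hik : h i - h k > 2*L
      · have hine : i ≠ k := by intro h'; rw [h'] at hik; linarith
        have habs := tne i hi k hk hine
        have hmem : (h i - h k - 2*L)/|t i - t k| ≤ βstar :=
          hβstar.2 ⟨i, hi, k, hk, hik, rfl⟩
        rw [div_le_iff₀ habs] at hmem
        nlinarith
      · push_neg at hik
        have : 0 ≤ β * |t i - t k| := by positivity
        linarith
    refine ⟨tentMax β L t h n, tentMax_pwlin β L (t 0) (t n) t h hβpos t0n n, ?_⟩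
    intro x hx
    obtain ⟨j, hj, hxj1, hxj2⟩ := exists_piece t x hx.1 n hn hx.2
    have hD : 0 < t (j+1) - t j := sub_pos.mpr (ht j hj)
    set ρ := (h (j+1) - h j) / (t (j+1) - t j) with hρ
    have hρmul : ρ * (t (j+1) - t j) = h (j+1) - h j := div_mul_cancel₀ _ (ne_of_gt hD)
    have hfx : f x = h j + (x - t j) * ρ := hf j hj x ⟨hxj1, hxj2⟩
    rw [abs_le]
    constructor
    · -- lower bound: f x - L ≤ g x
      rw [neg_le, neg_sub]
      rcases hslope j hj with hs | hs
      · -- increasing piece, use tent j+1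
        have hge := tentMax_ge β L t h n x (j+1) (by omega)
        have habs : |x - t (j+1)| = t (j+1) - x := by
          rw [abs_of_nonpos (by linarith)]; ring
        rw [habs] at hge
        have hρα : ρ = α := mul_right_cancel₀ (ne_of_gt hD) (hρmul.trans hs)
        rw [hfx, hρα]
        nlinarith [mul_le_mul_of_nonneg_right hβα (show (0:ℝ) ≤ t (j+1) - x by linarith)]
      · -- decreasing piece, use tent j
        have hge := tentMax_ge β L t h n x j (by omega)
        have habs : |x - t j| = x - t j := abs_of_nonneg (by linarith)
        rw [habs] at hge
        have hρα : ρ = -α := mul_right_cancel₀ (ne_of_gt hD)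
          (hρmul.trans (by rw [hs]))
        rw [hfx, hρα]
        nlinarith [mul_le_mul_of_nonneg_right hβα (show (0:ℝ) ≤ x - t j by linarith)]
    · -- upper bound: g x ≤ f x + L
      have hub : tentMax β L t h n x ≤ f x + L := by
        refine tentMax_le β L t h n x (f x + L) ?_
        intro i hi
        rcases le_or_gt i j with h1 | h1
        · -- t i ≤ t j ≤ x
          have hti : t i ≤ t j := tmono i j h1 (by omega)
          have habs : |x - t i| = x - t i := abs_of_nonneg (by linarith)
          have hp1 := hpair i hi j (by omega)
          have hp2 := hpair i hi (j+1) (by omega)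
          rw [show |t i - t j| = t j - t i by rw [abs_of_nonpos (by linarith)]; ring] at hp1
          rw [show |t i - t (j+1)| = t (j+1) - t i by
            rw [abs_of_nonpos (by linarith)]; ring] at hp2
          have hseg : (h i - h j - 2*L - β*(t j - t i)) + (-β - ρ) * (x - t j) ≤ 0 := by
            refine seg_le hxj1 hxj2 (by linarith) ?_
            nlinarith [hρmul]
          rw [habs, hfx]
          nlinarith [hseg]
        · -- x ≤ t (j+1) ≤ t i
          have hti : t (j+1) ≤ t i := tmono (j+1) i h1 hi
          have habs : |x - t i| = t i - x := by rw [abs_of_nonpos (by linarith)]; ring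
          have hp1 := hpair i hi j (by omega)
          have hp2 := hpair i hi (j+1) (by omega)
          rw [show |t i - t j| = t i - t j by rw [abs_of_nonneg (by linarith)]] at hp1
          rw [show |t i - t (j+1)| = t i - t (j+1) by rw [abs_of_nonneg (by linarith)]] at hp2
          have hseg : (h i - h j - 2*L - β*(t i - t j)) + (β - ρ) * (x - t j) ≤ 0 := by
            refine seg_le hxj1 hxj2 (by linarith) ?_
            nlinarith [hρmul]
          rw [habs, hfx]
          nlinarith [hseg]
      linarith
end

section
/- Assume there exists at least one pair of indices i, j ∈ {0, …, n} with h_i − h_j > 2L. Then the maximum of (h_i − h_j − 2L)/|t_i − t_j| over all such pairs is attained at a pair (i, j) such that i ∈ {0, n} or i is a lower reflex index, and j ∈ {0, n} or j is an upper reflex index. (Thus the largest slope among overlapping pairs is realized by reflex points, up to the corridor endpoints.) -/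
section OverlapSlope

variable {n : ℕ} {t h : ℕ → ℝ} {L : ℝ}

noncomputable def overlapSlope (t h : ℕ → ℝ) (L : ℝ) (i j : ℕ) : ℝ :=
  (h i - h j - 2 * L) / |t i - t j|

lemma overlapSlope_neg_swap (t h : ℕ → ℝ) (L : ℝ) (i j : ℕ) :
    overlapSlope t (-h) L j i = overlapSlope t h L i j := by
  unfold overlapSlope
  rw [abs_sub_comm]
  congr 1
  simp only [Pi.neg_apply]
  ring

lemma exists_forall_overlapSlope_le (hex : ∃ i ≤ n, ∃ j ≤ n, h i - h j > 2 * L) :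
    ∃ i ≤ n, ∃ j ≤ n, 2 * L < h i - h j ∧ ∀ i' ≤ n, ∀ j' ≤ n, 2 * L < h i' - h j' →
      overlapSlope t h L i' j' ≤ overlapSlope t h L i j := by
  classical
  let pairs := (Finset.range (n + 1) ×ˢ Finset.range (n + 1)).filter
    (fun p : ℕ × ℕ => 2 * L < h p.1 - h p.2)
  have mem_pairs : ∀ i j, (i, j) ∈ pairs ↔ (i ≤ n ∧ j ≤ n) ∧ 2 * L < h i - h j := by
    simp [pairs]
  obtain ⟨i₀, hi₀, j₀, hj₀, hgap₀⟩ := hex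
  obtain ⟨⟨i, j⟩, hmem, hmax⟩ := pairs.exists_max_image (fun p => overlapSlope t h L p.1 p.2)
    ⟨(i₀, j₀), (mem_pairs i₀ j₀).2 ⟨⟨hi₀, hj₀⟩, hgap₀⟩⟩
  obtain ⟨⟨hi, hj⟩, hgap⟩ := (mem_pairs i j).1 hmem
  exact ⟨i, hi, j, hj, hgap, fun i' hi' j' hj' hgap' =>
    hmax (i', j') ((mem_pairs i' j').2 ⟨⟨hi', hj'⟩, hgap'⟩)⟩

lemma abs_sub_lt_abs_sub_of_strictMonoOn (ht : StrictMonoOn t (Set.Iic n)) {i i' j : ℕ}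
    (hi : i ≤ n) (hj : j ≤ n) (hbetween : j < i' ∧ i' < i ∨ i < i' ∧ i' < j) :
    0 < |t i' - t j| ∧ |t i' - t j| < |t i - t j| := by
  rcases hbetween with ⟨hji', hi'i⟩ | ⟨hii', hi'j⟩
  · have h₁ := ht (Set.mem_Iic.2 hj) (Set.mem_Iic.2 (by omega : i' ≤ n)) hji'
    have h₂ := ht (Set.mem_Iic.2 (by omega : i' ≤ n)) (Set.mem_Iic.2 hi) hi'i
    rw [abs_of_pos (sub_pos.2 h₁), abs_of_pos (sub_pos.2 (h₁.trans h₂))]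
    constructor <;> linarith
  · have h₁ := ht (Set.mem_Iic.2 hi) (Set.mem_Iic.2 (by omega : i' ≤ n)) hii'
    have h₂ := ht (Set.mem_Iic.2 (by omega : i' ≤ n)) (Set.mem_Iic.2 hj) hi'j
    rw [abs_of_neg (sub_neg.2 h₂), abs_of_neg (sub_neg.2 (h₁.trans h₂))]
    constructor <;> linarith

lemma exists_overlapSlope_lt_of_localMin (ht : StrictMonoOn t (Set.Iic n)) (hL : 0 ≤ L)
    {i j : ℕ} (hi₀ : 0 < i) (hin : i < n) (hj : j ≤ n) (hgap : 2 * L < h i - h j)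
    (hmin : h i ≤ h (i - 1) ∧ h i ≤ h (i + 1)) :
    ∃ i' ≤ n, 2 * L < h i' - h j ∧ overlapSlope t h L i j < overlapSlope t h L i' j := by
  have hji : h j < h i := by linarith
  obtain ⟨i', hi'n, hhi', hbetween⟩ :
      ∃ i' ≤ n, h i ≤ h i' ∧ (j < i' ∧ i' < i ∨ i < i' ∧ i' < j) := by
    rcases lt_trichotomy j i with hlt | rfl | hgt
    · have : j ≠ i - 1 := by rintro rfl; linarith [hmin.1]
      exact ⟨i - 1, by omega, hmin.1, Or.inl ⟨by omega, by omega⟩⟩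
    · exact absurd hji (lt_irrefl _)
    · have : j ≠ i + 1 := by rintro rfl; linarith [hmin.2]
      exact ⟨i + 1, by omega, hmin.2, Or.inr ⟨by omega, by omega⟩⟩
  obtain ⟨hpos, hcloser⟩ := abs_sub_lt_abs_sub_of_strictMonoOn ht hin.le hj hbetween
  exact ⟨i', hi'n, by linarith, div_lt_div₀' (by linarith) hcloser (by linarith) hpos⟩

lemma exists_overlapSlope_lt_of_localMax (ht : StrictMonoOn t (Set.Iic n)) (hL : 0 ≤ L)
    {i j : ℕ} (hi : i ≤ n) (hj₀ : 0 < j) (hjn : j < n) (hgap : 2 * L < h i - h j)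
    (hmax : h (j - 1) ≤ h j ∧ h (j + 1) ≤ h j) :
    ∃ j' ≤ n, 2 * L < h i - h j' ∧ overlapSlope t h L i j < overlapSlope t h L i j' := by
  obtain ⟨j', hj'n, hgap', hlt⟩ := exists_overlapSlope_lt_of_localMin (h := -h) ht hL hj₀ hjn hi
    (by simp only [Pi.neg_apply]; linarith) (by simp only [Pi.neg_apply, neg_le_neg_iff]; exact hmax)
  refine ⟨j', hj'n, by simp only [Pi.neg_apply] at hgap'; linarith, ?_⟩
  rwa [overlapSlope_neg_swap, overlapSlope_neg_swap] at hlt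

lemma localMax_or_localMin_of_alternating
    (halt : ∀ i, i + 1 < n → (h (i + 2) - h (i + 1)) * (h (i + 1) - h i) < 0)
    {k : ℕ} (hk₀ : 0 < k) (hkn : k < n) :
    (h (k - 1) < h k ∧ h (k + 1) < h k) ∨ (h k < h (k - 1) ∧ h k < h (k + 1)) := by
  obtain ⟨m, rfl⟩ : ∃ m, k = m + 1 := ⟨k - 1, by omega⟩
  rw [Nat.add_sub_cancel, add_assoc, one_add_one_eq_two]
  rcases mul_neg_iff.1 (halt m (by omega)) with ⟨hup, hdown⟩ | ⟨hdown, hup⟩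
  · exact Or.inr ⟨by linarith, by linarith⟩
  · exact Or.inl ⟨by linarith, by linarith⟩

end OverlapSlope

theorem stmt_6_general
    (n : ℕ) (t h : ℕ → ℝ) (L : ℝ)
    (hL : 0 < L)
    (ht : ∀ i < n, t i < t (i + 1))
    (halt : ∀ i, i + 1 < n → (h (i + 2) - h (i + 1)) * (h (i + 1) - h i) < 0)
    (hex : ∃ i ≤ n, ∃ j ≤ n, h i - h j > 2 * L) :
    ∃ i ≤ n, ∃ j ≤ n, h i - h j > 2 * L ∧
      (i = 0 ∨ i = n ∨ (0 < i ∧ i < n ∧ h (i - 1) < h i ∧ h (i + 1) < h i)) ∧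
      (j = 0 ∨ j = n ∨ (0 < j ∧ j < n ∧ h j < h (j - 1) ∧ h j < h (j + 1))) ∧
      ∀ i' ≤ n, ∀ j' ≤ n, h i' - h j' > 2 * L →
        (h i' - h j' - 2 * L) / |t i' - t j'| ≤ (h i - h j - 2 * L) / |t i - t j| := by
  have htm : StrictMonoOn t (Set.Iic n) := strictMonoOn_Iic_of_lt_succ ht
  obtain ⟨i, hi, j, hj, hgap, hmax⟩ := exists_forall_overlapSlope_le (t := t) hex
  refine ⟨i, hi, j, hj, hgap, ?_, ?_, hmax⟩
  · by_cases hint : 0 < i ∧ i < n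
    · rcases localMax_or_localMin_of_alternating halt hint.1 hint.2 with hlmax | hlmin
      · exact Or.inr (Or.inr ⟨hint.1, hint.2, hlmax⟩)
      · obtain ⟨i', hi', hgap', hlt⟩ := exists_overlapSlope_lt_of_localMin htm hL.le hint.1
          hint.2 hj hgap ⟨hlmin.1.le, hlmin.2.le⟩
        exact absurd (hmax i' hi' j hj hgap') hlt.not_ge
    · omega
  · by_cases hint : 0 < j ∧ j < n
    · rcases localMax_or_localMin_of_alternating halt hint.1 hint.2 with hlmax | hlmin
      · obtain ⟨j', hj', hgap', hlt⟩ := exists_overlapSlope_lt_of_localMax htm hL.le hi hint.1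
          hint.2 hgap ⟨hlmax.1.le, hlmax.2.le⟩
        exact absurd (hmax i hi j' hj' hgap') hlt.not_ge
      · exact Or.inr (Or.inr ⟨hint.1, hint.2, hlmin⟩)
    · omega

/-- the largest slope among overlapping pairs is attained at a pair whose
first index is an endpoint or a lower reflex index and whose second index is an endpoint
or an upper reflex index. -/
theorem stmt_6
    (n : ℕ) (hn : 1 ≤ n) (t h : ℕ → ℝ) (α L : ℝ) (f : ℝ → ℝ)
    (hα : 0 < α) (hL : 0 < L)
    (ht : ∀ i < n, t i < t (i + 1))
    (hslope : ∀ i < n,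
      h (i + 1) - h i = α * (t (i + 1) - t i) ∨ h (i + 1) - h i = -α * (t (i + 1) - t i))
    (halt : ∀ i, i + 1 < n → (h (i + 2) - h (i + 1)) * (h (i + 1) - h i) < 0)
    (hf : ∀ i < n, ∀ x ∈ Set.Icc (t i) (t (i + 1)),
      f x = h i + (x - t i) * ((h (i + 1) - h i) / (t (i + 1) - t i)))
    (hex : ∃ i ≤ n, ∃ j ≤ n, h i - h j > 2 * L) :
    ∃ i ≤ n, ∃ j ≤ n, h i - h j > 2 * L ∧
      (i = 0 ∨ i = n ∨ (0 < i ∧ i < n ∧ h (i - 1) < h i ∧ h (i + 1) < h i)) ∧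
      (j = 0 ∨ j = n ∨ (0 < j ∧ j < n ∧ h j < h (j - 1) ∧ h j < h (j + 1))) ∧
      ∀ i' ≤ n, ∀ j' ≤ n, h i' - h j' > 2 * L →
        (h i' - h j' - 2 * L) / |t i' - t j'| ≤ (h i - h j - 2 * L) / |t i - t j| :=
  stmt_6_general n t h L hL ht halt hex
end
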